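/- arXiv:1905.10721 — 12 statements merged into one kernel-verified Lean document; each statement's English description precedes it below -/
import Mathlib

section
/- If E is Dedekind complete (every nonempty subset of E that is bounded below by an element of E has an infimum in E), then ι(x) = ρ(x) for every x ∈ G, and moreover ρ(y) = ν(y) for every y ∈ E. -/
/-!
For `0 ≤ x ≤ e ∈ E`, the supremum in `E` of `{z ∈ E | 0 ≤ z ≤ x}` is `x` itself: by order
density and the Archimedean property, `x` lies below every upper bound in `E` of its
approximants from `E`, and order density again rules out a strictly larger supremum. So `E` is
an order ideal, and being majorizing it contains `|x|` for every `x ∈ G`; hence the supremum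
defining `ρ x` and the infimum defining `ι x` are both attained at `|x|`.
-/

open Pointwise

section

variable {G : Type*} [Lattice G] [AddCommGroup G] [CovariantClass G G (· + ·) (· ≤ ·)]

theorem AddSubmonoid.le_of_forall_le_of_orderDense (E : AddSubmonoid G)
    (arch : ∀ x y : G, (∀ n : ℕ, n • x ≤ y) → x ≤ 0)
    (hdense : ∀ x : G, 0 < x → ∃ y ∈ E, 0 < y ∧ y ≤ x)
    {x u : G} (hx : 0 ≤ x) (hub : ∀ z ∈ E, 0 ≤ z → z ≤ x → z ≤ u) : x ≤ u := by
  have hu : 0 ≤ u := hub 0 E.zero_mem le_rfl hx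
  rcases (sub_nonneg.2 (inf_le_left : x ⊓ u ≤ x)).lt_or_eq with hpos | hzero
  · obtain ⟨z, hzE, hz, hzd⟩ := hdense _ hpos
    -- adding `z ≤ x - x ⊓ u` to something below `x ⊓ u` stays below `x`, hence below `u`
    have hmul : ∀ n : ℕ, n • z ≤ x ⊓ u := by
      intro n
      induction n with
      | zero => simpa using le_inf hx hu
      | succ n ih =>
        have hx' : (n + 1) • z ≤ x :=
          calc (n + 1) • z = n • z + z := succ_nsmul z n
            _ ≤ x ⊓ u + (x - x ⊓ u) := add_le_add ih hzd
            _ = x := add_sub_cancel _ _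
        exact le_inf hx' (hub _ (E.nsmul_mem hzE _) (nsmul_nonneg hz.le _) hx')
    exact absurd (arch z x fun n => (hmul n).trans inf_le_left) hz.not_ge
  · exact (sub_eq_zero.1 hzero.symm).le.trans inf_le_right

theorem AddSubgroup.exists_lub_of_exists_glb (E : AddSubgroup G)
    (hDC : ∀ A : Set G, A ⊆ E → A.Nonempty → (∃ b ∈ E, ∀ a ∈ A, b ≤ a) →
      ∃ m ∈ E, (∀ a ∈ A, m ≤ a) ∧ ∀ b ∈ E, (∀ a ∈ A, b ≤ a) → b ≤ m)
    {A : Set G} (hAE : A ⊆ E) (hA : A.Nonempty) (hbdd : ∃ b ∈ E, ∀ a ∈ A, a ≤ b) :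
    ∃ s ∈ E, (∀ a ∈ A, a ≤ s) ∧ ∀ b ∈ E, (∀ a ∈ A, a ≤ b) → s ≤ b := by
  obtain ⟨b, hbE, hb⟩ := hbdd
  obtain ⟨m, hmE, hmA, hmax⟩ := hDC (-A) (fun a ha => by simpa using E.neg_mem (hAE ha))
    hA.neg ⟨-b, E.neg_mem hbE, fun a ha => neg_le.1 (hb _ ha)⟩
  refine ⟨-m, E.neg_mem hmE, fun a ha => le_neg.1 (hmA (-a) (by simpa using ha)), ?_⟩
  intro c hcE hc
  exact neg_le.1 (hmax (-c) (E.neg_mem hcE) fun a ha => neg_le.1 (hc _ (Set.mem_neg.1 ha)))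

theorem AddSubgroup.mem_of_nonneg_of_le_mem (E : AddSubgroup G)
    (arch : ∀ x y : G, (∀ n : ℕ, n • x ≤ y) → x ≤ 0)
    (hdense : ∀ x : G, 0 < x → ∃ y ∈ E, 0 < y ∧ y ≤ x)
    (hsup : ∀ A : Set G, A ⊆ E → A.Nonempty → (∃ b ∈ E, ∀ a ∈ A, a ≤ b) →
      ∃ s ∈ E, (∀ a ∈ A, a ≤ s) ∧ ∀ b ∈ E, (∀ a ∈ A, a ≤ b) → s ≤ b)
    {x e : G} (hx : 0 ≤ x) (he : e ∈ E) (hxe : x ≤ e) : x ∈ E := by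
  obtain ⟨s, hsE, hsA, hsmin⟩ := hsup {z | z ∈ E ∧ 0 ≤ z ∧ z ≤ x} (fun z hz => hz.1)
    ⟨0, E.zero_mem, le_rfl, hx⟩ ⟨e, he, fun z hz => hz.2.2.trans hxe⟩
  have hxs : x ≤ s := E.toAddSubmonoid.le_of_forall_le_of_orderDense arch hdense hx
    fun z hzE hz hzx => hsA z ⟨hzE, hz, hzx⟩
  rcases (sub_nonneg.2 hxs).lt_or_eq with hpos | hzero
  · obtain ⟨w, hwE, hw, hwd⟩ := hdense _ hpos
    have hsw : s ≤ s - w :=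
      hsmin _ (E.sub_mem hsE hwE) fun z hz => hz.2.2.trans (le_sub_comm.2 hwd)
    exact absurd ((le_sub_self_iff s).1 hsw) hw.not_ge
  · rwa [sub_eq_zero.1 hzero.symm] at hsE

theorem abs_mem_of_majorizing {E : Set G}
    (hideal : ∀ x e : G, 0 ≤ x → e ∈ E → x ≤ e → x ∈ E)
    (hmaj : ∀ x : G, ∃ y ∈ E, x ≤ y) (hEsup : ∀ x ∈ E, ∀ y ∈ E, x ⊔ y ∈ E) (x : G) :
    |x| ∈ E := by
  obtain ⟨y₁, hy₁E, hy₁⟩ := hmaj x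
  obtain ⟨y₂, hy₂E, hy₂⟩ := hmaj (-x)
  exact hideal _ _ (abs_nonneg x) (hEsup _ hy₁E _ hy₂E)
    (sup_le (hy₁.trans le_sup_left) (hy₂.trans le_sup_right))

variable {E : Set G} {ν : G → ℝ}

theorem csSup_image_nonneg_le_abs (hν_mono : ∀ x ∈ E, ∀ y ∈ E, |x| ≤ |y| → ν x ≤ ν y)
    {x : G} (hx : |x| ∈ E) : sSup (ν '' {z | z ∈ E ∧ 0 ≤ z ∧ z ≤ |x|}) = ν |x| := by
  refine IsGreatest.csSup_eq ⟨⟨|x|, ⟨hx, abs_nonneg x, le_rfl⟩, rfl⟩, ?_⟩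
  rintro _ ⟨z, ⟨hzE, hz, hzx⟩, rfl⟩
  exact hν_mono _ hzE _ hx (by rwa [abs_of_nonneg hz, abs_abs])

theorem csInf_image_abs_le (hν_mono : ∀ x ∈ E, ∀ y ∈ E, |x| ≤ |y| → ν x ≤ ν y)
    {x : G} (hx : |x| ∈ E) : sInf (ν '' {y | y ∈ E ∧ |x| ≤ y}) = ν |x| := by
  refine IsLeast.csInf_eq ⟨⟨|x|, ⟨hx, le_rfl⟩, rfl⟩, ?_⟩
  rintro _ ⟨y, ⟨hyE, hxy⟩, rfl⟩
  exact hν_mono _ hx _ hyE (by rw [abs_abs]; exact hxy.trans (le_abs_self y))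

end

theorem stmt1_general
    {G : Type*} [Lattice G] [AddCommGroup G] [Module ℝ G]
    [CovariantClass G G (· + ·) (· ≤ ·)]
    (arch : ∀ x y : G, (∀ n : ℕ, n • x ≤ y) → x ≤ 0)
    (E : Set G)
    (hE0 : (0 : G) ∈ E)
    (hEadd : ∀ x ∈ E, ∀ y ∈ E, x + y ∈ E)
    (hEsmul : ∀ (c : ℝ), ∀ x ∈ E, c • x ∈ E)
    (hEsup : ∀ x ∈ E, ∀ y ∈ E, x ⊔ y ∈ E)
    (hdense : ∀ x : G, 0 < x → ∃ y ∈ E, 0 < y ∧ y ≤ x)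
    (hmaj : ∀ x : G, ∃ y ∈ E, x ≤ y)
    (ν : G → ℝ)
    (hν_mono : ∀ x ∈ E, ∀ y ∈ E, |x| ≤ |y| → ν x ≤ ν y)
    (ρ : G → ℝ)
    (hρ : ∀ x : G, ρ x = sSup (ν '' {z | z ∈ E ∧ 0 ≤ z ∧ z ≤ |x|}))
    (ι : G → ℝ)
    (hι : ∀ x : G, ι x = sInf (ν '' {y | y ∈ E ∧ |x| ≤ y}))
    (hDC : ∀ A : Set G, A ⊆ E → A.Nonempty → (∃ b ∈ E, ∀ a ∈ A, b ≤ a) →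
      ∃ m ∈ E, (∀ a ∈ A, m ≤ a) ∧ ∀ b ∈ E, (∀ a ∈ A, b ≤ a) → b ≤ m) :
    (∀ x : G, ι x = ρ x) ∧ (∀ y ∈ E, ρ y = ν y) := by
  let S : AddSubgroup G :=
    { carrier := E
      zero_mem' := hE0
      add_mem' := fun ha hb => hEadd _ ha _ hb
      neg_mem' := fun ha => by simpa using hEsmul (-1) _ ha }
  have habs : ∀ x : G, |x| ∈ E := abs_mem_of_majorizing
    (fun _ _ hx he hxe => S.mem_of_nonneg_of_le_mem arch hdense
      (fun _ => S.exists_lub_of_exists_glb hDC) hx he hxe)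
    hmaj hEsup
  have hρν : ∀ x : G, ρ x = ν |x| := fun x =>
    (hρ x).trans (csSup_image_nonneg_le_abs hν_mono (habs x))
  refine ⟨fun x => by rw [hι, csInf_image_abs_le hν_mono (habs x), hρν], fun y hy => ?_⟩
  rw [hρν]
  exact le_antisymm (hν_mono _ (habs y) _ hy (abs_abs y).le) (hν_mono _ hy _ (habs y) (abs_abs y).ge)

theorem stmt1
    {G : Type*} [Lattice G] [AddCommGroup G] [Module ℝ G]
    [CovariantClass G G (· + ·) (· ≤ ·)] [PosSMulMono ℝ G]
    (arch : ∀ x y : G, (∀ n : ℕ, n • x ≤ y) → x ≤ 0)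
    (E : Set G)
    (hE0 : (0 : G) ∈ E)
    (hEadd : ∀ x ∈ E, ∀ y ∈ E, x + y ∈ E)
    (hEsmul : ∀ (c : ℝ), ∀ x ∈ E, c • x ∈ E)
    (hEsup : ∀ x ∈ E, ∀ y ∈ E, x ⊔ y ∈ E)
    (hEinf : ∀ x ∈ E, ∀ y ∈ E, x ⊓ y ∈ E)
    (hdense : ∀ x : G, 0 < x → ∃ y ∈ E, 0 < y ∧ y ≤ x)
    (hmaj : ∀ x : G, ∃ y ∈ E, x ≤ y)
    (ν : G → ℝ)
    (hν_zero : ∀ x ∈ E, (ν x = 0 ↔ x = 0))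
    (hν_smul : ∀ (c : ℝ), ∀ x ∈ E, ν (c • x) = |c| * ν x)
    (hν_add : ∀ x ∈ E, ∀ y ∈ E, ν (x + y) ≤ ν x + ν y)
    (hν_mono : ∀ x ∈ E, ∀ y ∈ E, |x| ≤ |y| → ν x ≤ ν y)
    (ρ : G → ℝ)
    (hρ : ∀ x : G, ρ x = sSup (ν '' {z | z ∈ E ∧ 0 ≤ z ∧ z ≤ |x|}))
    (ι : G → ℝ)
    (hι : ∀ x : G, ι x = sInf (ν '' {y | y ∈ E ∧ |x| ≤ y}))
    (hDC : ∀ A : Set G, A ⊆ E → A.Nonempty → (∃ b ∈ E, ∀ a ∈ A, b ≤ a) →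
      ∃ m ∈ E, (∀ a ∈ A, m ≤ a) ∧ ∀ b ∈ E, (∀ a ∈ A, b ≤ a) → b ≤ m) :
    (∀ x : G, ι x = ρ x) ∧ (∀ y ∈ E, ρ y = ν y) :=
  stmt1_general arch E hE0 hEadd hEsmul hEsup hdense hmaj ν hν_mono ρ hρ ι hι hDC
end

section
/- If the norm ν on E is order continuous, then ι(x) = ρ(x) for every x ∈ G, and moreover ρ(y) = ν(y) for every y ∈ E. -/
/-!
Write `w = |x|`, `S = E ∩ [0, w]` and `T = E ∩ [w, ∞)`. Since `E` is order dense and `G` is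
Archimedean, `sup S = w`; since `E` is moreover majorizing, `inf T = w`. Hence `T - S ⊆ E` is a
downward directed set of positive elements with infimum `0`, so order continuity gives
`inf ν(T - S) = 0`, and subadditivity `ν y ≤ ν (y - z) + ν z` turns this into `ι x ≤ ρ x`; the
reverse inequality is monotonicity of `ν`. For `y ∈ E` the supremum defining `ρ y` is attained
at `|y| ∈ S`, and `ν |y| = ν y`.
-/

open Set Pointwise

section OrderedGroup

variable {G : Type*} [AddCommGroup G] [Preorder G] [AddLeftMono G]

theorem IsGLB.sub_isLUB {s t : Set G} {a b : G} (ht : IsGLB t a) (hs : IsLUB s b) :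
    IsGLB (t - s) (a - b) := by
  refine ⟨?_, fun c hc ↦ ?_⟩
  · rintro _ ⟨y, hy, z, hz, rfl⟩
    exact sub_le_sub (ht.1 hy) (hs.1 hz)
  · have hct : c + b ∈ lowerBounds t := fun y hy ↦ by
      have hb : b ≤ y - c := hs.2 fun z hz ↦ by
        have := hc ⟨y, hy, z, hz, rfl⟩
        rwa [le_sub_comm]
      rwa [le_sub_iff_add_le'] at hb
    exact le_sub_iff_add_le.mpr (ht.2 hct)

theorem DirectedOn.sub {s t : Set G} (ht : DirectedOn (· ≥ ·) t) (hs : DirectedOn (· ≤ ·) s) :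
    DirectedOn (· ≥ ·) (t - s) := by
  rintro _ ⟨y₁, hy₁, z₁, hz₁, rfl⟩ _ ⟨y₂, hy₂, z₂, hz₂, rfl⟩
  obtain ⟨y, hy, hy₁y, hy₂y⟩ := ht y₁ hy₁ y₂ hy₂
  obtain ⟨z, hz, hz₁z, hz₂z⟩ := hs z₁ hz₁ z₂ hz₂
  exact ⟨y - z, ⟨y, hy, z, hz, rfl⟩, sub_le_sub hy₁y hz₁z, sub_le_sub hy₂y hz₂z⟩

end OrderedGroup

section MonotoneOn

variable {G : Type*} [Preorder G] [Zero G] {E : Set G} {ν : G → ℝ}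

theorem bddBelow_image_inter_Ici (hmono : MonotoneOn ν (E ∩ Ici 0)) (hE0 : 0 ∈ E) {w : G}
    (hw : 0 ≤ w) : BddBelow (ν '' (E ∩ Ici w)) :=
  ⟨ν 0, by
    rintro _ ⟨y, hy, rfl⟩
    exact hmono ⟨hE0, le_rfl⟩ ⟨hy.1, hw.trans hy.2⟩ (hw.trans hy.2)⟩

theorem bddAbove_image_inter_Icc (hmono : MonotoneOn ν (E ∩ Ici 0)) {w y₀ : G}
    (hy₀ : y₀ ∈ E ∩ Ici w) : BddAbove (ν '' (E ∩ Icc 0 w)) :=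
  ⟨ν y₀, by
    rintro _ ⟨z, hz, rfl⟩
    exact hmono ⟨hz.1, hz.2.1⟩ ⟨hy₀.1, hz.2.1.trans (hz.2.2.trans hy₀.2)⟩ (hz.2.2.trans hy₀.2)⟩

theorem csSup_image_inter_Icc_le_csInf (hmono : MonotoneOn ν (E ∩ Ici 0)) (hE0 : 0 ∈ E) {w : G}
    (hw : 0 ≤ w) (hT : (E ∩ Ici w).Nonempty) :
    sSup (ν '' (E ∩ Icc 0 w)) ≤ sInf (ν '' (E ∩ Ici w)) := by
  refine csSup_le ⟨ν 0, 0, ⟨hE0, le_rfl, hw⟩, rfl⟩ ?_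
  rintro _ ⟨z, hz, rfl⟩
  refine le_csInf (hT.image ν) ?_
  rintro _ ⟨y, hy, rfl⟩
  exact hmono ⟨hz.1, hz.2.1⟩ ⟨hy.1, hz.2.1.trans (hz.2.2.trans hy.2)⟩ (hz.2.2.trans hy.2)

end MonotoneOn

theorem csInf_image_le_csSup_image_add_csInf_image_sub {G : Type*} [AddGroup G] {ν : G → ℝ}
    {E : AddSubgroup G} (hν_add : ∀ x ∈ E, ∀ y ∈ E, ν (x + y) ≤ ν x + ν y) {s t : Set G}
    (hs : s ⊆ E) (ht : t ⊆ E) (hst : (t - s).Nonempty) (hbs : BddAbove (ν '' s))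
    (hbt : BddBelow (ν '' t)) :
    sInf (ν '' t) ≤ sSup (ν '' s) + sInf (ν '' (t - s)) := by
  rw [← sub_le_iff_le_add']
  refine le_csInf (hst.image ν) ?_
  rintro _ ⟨_, ⟨y, hy, z, hz, rfl⟩, rfl⟩
  have hνy : ν y ≤ ν (y - z) + ν z := by
    simpa using hν_add (y - z) (E.sub_mem (ht hy) (hs hz)) z (hs hz)
  have hinf : sInf (ν '' t) ≤ ν y := csInf_le hbt ⟨y, hy, rfl⟩
  have hsup : ν z ≤ sSup (ν '' s) := le_csSup hbs ⟨z, hz, rfl⟩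
  linarith

section LatticeOrderedGroup

variable {G : Type*} [Lattice G] [AddCommGroup G] [AddLeftMono G]

theorem isLUB_inter_Icc_of_orderDense (arch : ∀ x y : G, (∀ n : ℕ, n • x ≤ y) → x ≤ 0)
    {E : AddSubmonoid G} (hdense : ∀ x : G, 0 < x → ∃ y ∈ E, 0 < y ∧ y ≤ x) {x : G}
    (hx : 0 ≤ x) : IsLUB ((E : Set G) ∩ Icc 0 x) x := by
  refine ⟨fun z hz ↦ hz.2.2, fun u hu ↦ ?_⟩
  by_contra hxu
  have hlt : x ⊓ u < x := inf_le_left.lt_of_ne fun h ↦ hxu (h ▸ inf_le_right)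
  obtain ⟨e, heE, he, hex⟩ := hdense (x - x ⊓ u) (sub_pos.mpr hlt)
  -- Each multiple of `e` below `x` is below `u`, hence below `x ⊓ u`, and adding `e` keeps it
  -- below `x`.
  have hmul : ∀ n : ℕ, n • e ≤ x := by
    intro n
    induction n with
    | zero => simpa using hx
    | succ n ih =>
      have hn : n • e ≤ x ⊓ u :=
        le_inf ih (hu ⟨E.nsmul_mem heE n, nsmul_nonneg he.le n, ih⟩)
      calc (n + 1) • e = n • e + e := succ_nsmul e n
        _ ≤ x ⊓ u + (x - x ⊓ u) := add_le_add hn hex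
        _ = x := add_sub_cancel _ _
  exact he.not_ge (arch e x hmul)

theorem isGLB_inter_Ici_of_orderDense (arch : ∀ x y : G, (∀ n : ℕ, n • x ≤ y) → x ≤ 0)
    {E : AddSubgroup G} (hdense : ∀ x : G, 0 < x → ∃ y ∈ E, 0 < y ∧ y ≤ x) {x y₀ : G}
    (hy₀ : y₀ ∈ E) (hxy₀ : x ≤ y₀) : IsGLB ((E : Set G) ∩ Ici x) x := by
  refine ⟨fun y hy ↦ hy.2, fun b hb ↦ ?_⟩
  -- Reflect through `y₀`: `z ↦ y₀ - z` maps `E ∩ [0, y₀ - x]` into `E ∩ [x, ∞)`.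
  have hlub := isLUB_inter_Icc_of_orderDense arch (E := E.toAddSubmonoid) hdense
    (sub_nonneg.mpr hxy₀)
  have : y₀ - x ≤ y₀ - b := hlub.2 fun z hz ↦
    le_sub_comm.mp (hb ⟨E.sub_mem hy₀ hz.1, le_sub_comm.mp hz.2.2⟩)
  exact (sub_le_sub_iff_left y₀).mp this

variable {ν : G → ℝ}

theorem monotoneOn_inter_Ici_zero {E : Set G}
    (hν_mono : ∀ x ∈ E, ∀ y ∈ E, |x| ≤ |y| → ν x ≤ ν y) : MonotoneOn ν (E ∩ Ici 0) :=
  fun z hz y hy hzy ↦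
    hν_mono z hz.1 y hy.1 (by rwa [abs_of_nonneg hz.2, abs_of_nonneg (mem_Ici.mp hy.2)])

theorem csSup_image_inter_Icc_abs {E : Set G}
    (hν_mono : ∀ x ∈ E, ∀ y ∈ E, |x| ≤ |y| → ν x ≤ ν y) {y : G} (hy : y ∈ E) (habs : |y| ∈ E) :
    sSup (ν '' (E ∩ Icc 0 |y|)) = ν y := by
  have hνabs : ν |y| = ν y :=
    le_antisymm (hν_mono _ habs _ hy (abs_abs y).le) (hν_mono _ hy _ habs (abs_abs y).ge)
  rw [← hνabs]
  refine IsGreatest.csSup_eq ⟨⟨|y|, ⟨habs, abs_nonneg y, le_rfl⟩, rfl⟩, ?_⟩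
  rintro _ ⟨z, hz, rfl⟩
  exact monotoneOn_inter_Ici_zero hν_mono ⟨hz.1, hz.2.1⟩ ⟨habs, abs_nonneg y⟩ hz.2.2

theorem csInf_image_inter_Ici_eq_csSup (arch : ∀ x y : G, (∀ n : ℕ, n • x ≤ y) → x ≤ 0)
    {E : AddSubgroup G} (hEsup : ∀ x ∈ E, ∀ y ∈ E, x ⊔ y ∈ E)
    (hEinf : ∀ x ∈ E, ∀ y ∈ E, x ⊓ y ∈ E) (hdense : ∀ x : G, 0 < x → ∃ y ∈ E, 0 < y ∧ y ≤ x)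
    (hmono : MonotoneOn ν (E ∩ Ici 0)) (hν_add : ∀ x ∈ E, ∀ y ∈ E, ν (x + y) ≤ ν x + ν y)
    (hoc : ∀ D : Set G, D.Nonempty → D ⊆ E → (∀ d ∈ D, 0 ≤ d) →
      DirectedOn (· ≥ ·) D → IsGLB D 0 → sInf (ν '' D) = 0)
    {w y₀ : G} (hw : 0 ≤ w) (hy₀ : y₀ ∈ E) (hwy₀ : w ≤ y₀) :
    sInf (ν '' (E ∩ Ici w)) = sSup (ν '' (E ∩ Icc 0 w)) := by
  set S : Set G := E ∩ Icc 0 w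
  set T : Set G := E ∩ Ici w
  have hST : (T - S).Nonempty := ⟨y₀ - 0, y₀, ⟨hy₀, hwy₀⟩, 0, ⟨E.zero_mem, le_rfl, hw⟩, rfl⟩
  have hglb : IsGLB (T - S) 0 := by
    simpa using (isGLB_inter_Ici_of_orderDense arch hdense hy₀ hwy₀).sub_isLUB
      (isLUB_inter_Icc_of_orderDense arch (E := E.toAddSubmonoid) hdense hw)
  have hdir : DirectedOn (· ≥ ·) (T - S) := by
    refine DirectedOn.sub (fun y₁ hy₁ y₂ hy₂ ↦ ?_) (fun z₁ hz₁ z₂ hz₂ ↦ ?_)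
    · exact ⟨y₁ ⊓ y₂, ⟨hEinf _ hy₁.1 _ hy₂.1, le_inf hy₁.2 hy₂.2⟩, inf_le_left, inf_le_right⟩
    · exact ⟨z₁ ⊔ z₂, ⟨hEsup _ hz₁.1 _ hz₂.1, hz₁.2.1.trans le_sup_left, sup_le hz₁.2.2 hz₂.2.2⟩,
        le_sup_left, le_sup_right⟩
  have hsubE : T - S ⊆ E := by
    rintro _ ⟨y, hy, z, hz, rfl⟩
    exact E.sub_mem hy.1 hz.1
  have hzero : sInf (ν '' (T - S)) = 0 := hoc _ hST hsubE (fun _ hd ↦ hglb.1 hd) hdir hglb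
  refine le_antisymm ?_ (csSup_image_inter_Icc_le_csInf hmono E.zero_mem hw ⟨y₀, hy₀, hwy₀⟩)
  have := csInf_image_le_csSup_image_add_csInf_image_sub hν_add inter_subset_left
    inter_subset_left hST (bddAbove_image_inter_Icc hmono ⟨hy₀, hwy₀⟩)
    (bddBelow_image_inter_Ici hmono E.zero_mem hw)
  rwa [hzero, add_zero] at this

end LatticeOrderedGroup

theorem stmt2_general
    {G : Type*} [Lattice G] [AddCommGroup G] [Module ℝ G]
    [CovariantClass G G (· + ·) (· ≤ ·)]
    (arch : ∀ x y : G, (∀ n : ℕ, n • x ≤ y) → x ≤ 0)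
    (E : Set G)
    (hE0 : (0 : G) ∈ E)
    (hEadd : ∀ x ∈ E, ∀ y ∈ E, x + y ∈ E)
    (hEsmul : ∀ (c : ℝ), ∀ x ∈ E, c • x ∈ E)
    (hEsup : ∀ x ∈ E, ∀ y ∈ E, x ⊔ y ∈ E)
    (hEinf : ∀ x ∈ E, ∀ y ∈ E, x ⊓ y ∈ E)
    (hdense : ∀ x : G, 0 < x → ∃ y ∈ E, 0 < y ∧ y ≤ x)
    (hmaj : ∀ x : G, ∃ y ∈ E, x ≤ y)
    (ν : G → ℝ)
    (hν_add : ∀ x ∈ E, ∀ y ∈ E, ν (x + y) ≤ ν x + ν y)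
    (hν_mono : ∀ x ∈ E, ∀ y ∈ E, |x| ≤ |y| → ν x ≤ ν y)
    (ρ : G → ℝ)
    (hρ : ∀ x : G, ρ x = sSup (ν '' {z | z ∈ E ∧ 0 ≤ z ∧ z ≤ |x|}))
    (ι : G → ℝ)
    (hι : ∀ x : G, ι x = sInf (ν '' {y | y ∈ E ∧ |x| ≤ y}))
    (hoc : ∀ D : Set G, D.Nonempty → D ⊆ E → (∀ d ∈ D, 0 ≤ d) →
      DirectedOn (· ≥ ·) D → IsGLB D 0 → sInf (ν '' D) = 0)
    :
    (∀ x : G, ι x = ρ x) ∧ (∀ y ∈ E, ρ y = ν y) := by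
  have hEneg : ∀ x ∈ E, -x ∈ E := fun x hx ↦ by simpa using hEsmul (-1) x hx
  let F : AddSubgroup G :=
    { carrier := E
      add_mem' := fun hx hy ↦ hEadd _ hx _ hy
      zero_mem' := hE0
      neg_mem' := fun hx ↦ hEneg _ hx }
  refine ⟨fun x ↦ ?_, fun y hy ↦ ?_⟩
  · obtain ⟨y₀, hy₀, hxy₀⟩ := hmaj |x|
    rw [hρ, hι]
    exact csInf_image_inter_Ici_eq_csSup (E := F) arch hEsup hEinf hdense
      (monotoneOn_inter_Ici_zero hν_mono) hν_add hoc (abs_nonneg x) hy₀ hxy₀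
  · rw [hρ]
    exact csSup_image_inter_Icc_abs hν_mono hy (hEsup _ hy _ (hEneg _ hy))

theorem stmt2
    {G : Type*} [Lattice G] [AddCommGroup G] [Module ℝ G]
    [CovariantClass G G (· + ·) (· ≤ ·)] [PosSMulMono ℝ G]
    (arch : ∀ x y : G, (∀ n : ℕ, n • x ≤ y) → x ≤ 0)
    (E : Set G)
    (hE0 : (0 : G) ∈ E)
    (hEadd : ∀ x ∈ E, ∀ y ∈ E, x + y ∈ E)
    (hEsmul : ∀ (c : ℝ), ∀ x ∈ E, c • x ∈ E)
    (hEsup : ∀ x ∈ E, ∀ y ∈ E, x ⊔ y ∈ E)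
    (hEinf : ∀ x ∈ E, ∀ y ∈ E, x ⊓ y ∈ E)
    (hdense : ∀ x : G, 0 < x → ∃ y ∈ E, 0 < y ∧ y ≤ x)
    (hmaj : ∀ x : G, ∃ y ∈ E, x ≤ y)
    (ν : G → ℝ)
    (hν_zero : ∀ x ∈ E, (ν x = 0 ↔ x = 0))
    (hν_smul : ∀ (c : ℝ), ∀ x ∈ E, ν (c • x) = |c| * ν x)
    (hν_add : ∀ x ∈ E, ∀ y ∈ E, ν (x + y) ≤ ν x + ν y)
    (hν_mono : ∀ x ∈ E, ∀ y ∈ E, |x| ≤ |y| → ν x ≤ ν y)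
    (ρ : G → ℝ)
    (hρ : ∀ x : G, ρ x = sSup (ν '' {z | z ∈ E ∧ 0 ≤ z ∧ z ≤ |x|}))
    (ι : G → ℝ)
    (hι : ∀ x : G, ι x = sInf (ν '' {y | y ∈ E ∧ |x| ≤ y}))
    (hoc : ∀ D : Set G, D.Nonempty → D ⊆ E → (∀ d ∈ D, 0 ≤ d) →
      DirectedOn (· ≥ ·) D → IsGLB D 0 → sInf (ν '' D) = 0)
    :
    (∀ x : G, ι x = ρ x) ∧ (∀ y ∈ E, ρ y = ν y) :=
  stmt2_general arch E hE0 hEadd hEsmul hEsup hEinf hdense hmaj ν hν_add hν_mono ρ hρ ι hι hoc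
end

section
/- Suppose the norm ν on E is order continuous. Then for every x ∈ E^t with x ≥ 0 there exist a sequence (x_n) in E with 0 ≤ x_n, x_n increasing with supremum x and ρ(x − x_n) → 0, and a sequence (y_n) in E with 0 ≤ y_n, y_n decreasing with infimum x and ρ(y_n − x) → 0. -/
theorem stmt3
    {G : Type*} [Lattice G] [AddCommGroup G] [Module ℝ G]
    [CovariantClass G G (· + ·) (· ≤ ·)] [PosSMulMono ℝ G]
    (arch : ∀ x y : G, (∀ n : ℕ, n • x ≤ y) → x ≤ 0)
    (E : Set G)
    (hE0 : (0 : G) ∈ E)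
    (hEadd : ∀ x ∈ E, ∀ y ∈ E, x + y ∈ E)
    (hEsmul : ∀ (c : ℝ), ∀ x ∈ E, c • x ∈ E)
    (hEsup : ∀ x ∈ E, ∀ y ∈ E, x ⊔ y ∈ E)
    (hEinf : ∀ x ∈ E, ∀ y ∈ E, x ⊓ y ∈ E)
    (hdense : ∀ x : G, 0 < x → ∃ y ∈ E, 0 < y ∧ y ≤ x)
    (hmaj : ∀ x : G, ∃ y ∈ E, x ≤ y)
    (ν : G → ℝ)
    (hν_zero : ∀ x ∈ E, (ν x = 0 ↔ x = 0))
    (hν_smul : ∀ (c : ℝ), ∀ x ∈ E, ν (c • x) = |c| * ν x)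
    (hν_add : ∀ x ∈ E, ∀ y ∈ E, ν (x + y) ≤ ν x + ν y)
    (hν_mono : ∀ x ∈ E, ∀ y ∈ E, |x| ≤ |y| → ν x ≤ ν y)
    (ρ : G → ℝ)
    (hρ : ∀ x : G, ρ x = sSup (ν '' {z | z ∈ E ∧ 0 ≤ z ∧ z ≤ |x|}))
    (ι : G → ℝ)
    (hι : ∀ x : G, ι x = sInf (ν '' {y | y ∈ E ∧ |x| ≤ y}))
    (Et : Set G)
    (hEEt : E ⊆ Et)
    (hEtadd : ∀ x ∈ Et, ∀ y ∈ Et, x + y ∈ Et)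
    (hEtsmul : ∀ (c : ℝ), ∀ x ∈ Et, c • x ∈ Et)
    (hEtsup : ∀ x ∈ Et, ∀ y ∈ Et, x ⊔ y ∈ Et)
    (hEtinf : ∀ x ∈ Et, ∀ y ∈ Et, x ⊓ y ∈ Et)
    (hEt : ∀ x ∈ Et, ι x = ρ x)
    (hoc : ∀ D : Set G, D.Nonempty → D ⊆ E → (∀ d ∈ D, 0 ≤ d) →
      DirectedOn (· ≥ ·) D → IsGLB D 0 → sInf (ν '' D) = 0)
    :
    ∀ x ∈ Et, 0 ≤ x →
      (∃ xs : ℕ → G, (∀ n, xs n ∈ E) ∧ (∀ n, 0 ≤ xs n) ∧ Monotone xs ∧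
        IsLUB (Set.range xs) x ∧
        Filter.Tendsto (fun n => ρ (x - xs n)) Filter.atTop (nhds 0)) ∧
      (∃ ys : ℕ → G, (∀ n, ys n ∈ E) ∧ (∀ n, 0 ≤ ys n) ∧ Antitone ys ∧
        IsGLB (Set.range ys) x ∧
        Filter.Tendsto (fun n => ρ (ys n - x)) Filter.atTop (nhds 0)) := by

  intro x hxEt hx0
  clear hxEt
  -- basic facts about E and ν
  have hν0 : ν 0 = 0 := (hν_zero 0 hE0).mpr rfl
  have hEneg : ∀ z ∈ E, -z ∈ E := fun z hz => by
    have := hEsmul (-1) z hz; simpa using this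
  have hEsub : ∀ z ∈ E, ∀ w ∈ E, z - w ∈ E := fun z hz w hw => by
    have := hEadd z hz (-w) (hEneg w hw); simpa [sub_eq_add_neg] using this
  have hνnn : ∀ z ∈ E, 0 ≤ ν z := by
    intro z hz
    have h1 : ν (-z) = ν z := by simpa using hν_smul (-1) z hz
    have h2 : ν (z + -z) ≤ ν z + ν (-z) := hν_add z hz _ (hEneg z hz)
    rw [add_neg_cancel, hν0, h1] at h2
    linarith
  -- sup lemma: x is the sup of elements of E below it
  have hsup : ∀ a u : G, 0 ≤ a → (∀ z ∈ E, 0 ≤ z → z ≤ a → z ≤ u) → a ≤ u := by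
    intro a u ha hu
    by_contra hne
    have h0u : (0:G) ≤ u := hu 0 hE0 le_rfl ha
    have hv0 : 0 ≤ a - a ⊓ u := sub_nonneg.mpr inf_le_left
    have hvne : a - a ⊓ u ≠ 0 := by
      intro h
      have h2 : a = a ⊓ u := sub_eq_zero.mp h
      exact hne (h2.le.trans inf_le_right)
    obtain ⟨e, heE, he0, hev⟩ := hdense _ (lt_of_le_of_ne hv0 (Ne.symm hvne))
    have key : ∀ n : ℕ, n • e ∈ E ∧ 0 ≤ n • e ∧ n • e ≤ a ⊓ u := by
      intro n; induction n with
      | zero =>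
        refine ⟨?_, ?_, ?_⟩ <;> simp only [zero_nsmul]
        · exact hE0
        · exact le_rfl
        · exact le_inf ha h0u
      | succ k ih =>
        obtain ⟨hkE, hk0, hku⟩ := ih
        have hE' : (k+1) • e ∈ E := by
          rw [succ_nsmul]; exact hEadd _ hkE e heE
        have h0' : 0 ≤ (k+1) • e := by
          rw [succ_nsmul]; exact add_nonneg hk0 he0.le
        have hxa : (k+1) • e ≤ a := by
          rw [succ_nsmul]
          calc k • e + e ≤ a ⊓ u + (a - a ⊓ u) := add_le_add hku hev
            _ = a := by abel
        exact ⟨hE', h0', le_inf hxa (hu _ hE' h0' hxa)⟩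
    exact absurd (arch e (a ⊓ u) fun n => (key n).2.2) he0.not_ge
  -- inf lemma: x is the inf of elements of E above it
  have hinfl : ∀ u : G, (∀ y ∈ E, x ≤ y → u ≤ y) → u ≤ x := by
    intro u hu
    obtain ⟨y₀, hy₀E, hxy₀⟩ := hmaj x
    have h1 : y₀ - x ≤ y₀ - u := by
      refine hsup (y₀ - x) (y₀ - u) (sub_nonneg.mpr hxy₀) ?_
      intro z hzE hz0 hz
      have hxz : x ≤ y₀ - z := le_sub_comm.mp hz
      have := hu (y₀ - z) (hEsub _ hy₀E _ hzE) hxz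
      exact le_sub_comm.mp this
    exact (sub_le_sub_iff_left y₀).mp h1
  -- the directed set D
  have hD : sInf (ν '' {d | ∃ y ∈ E, ∃ z ∈ E, 0 ≤ z ∧ z ≤ x ∧ x ≤ y ∧ d = y - z}) = 0 := by
    obtain ⟨y₀, hy₀E, hxy₀⟩ := hmaj x
    refine hoc _ ⟨y₀ - 0, y₀, hy₀E, 0, hE0, le_rfl, hx0, hxy₀, rfl⟩ ?_ ?_ ?_ ?_
    · rintro d ⟨y, hy, z, hz, _, _, _, rfl⟩
      exact hEsub y hy z hz
    · rintro d ⟨y, hy, z, hz, h0, hzx, hxy, rfl⟩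
      exact sub_nonneg.mpr (hzx.trans hxy)
    · rintro d₁ ⟨y₁, hy₁, z₁, hz₁, h₁0, h₁x, hx₁, rfl⟩ d₂ ⟨y₂, hy₂, z₂, hz₂, h₂0, h₂x, hx₂, rfl⟩
      refine ⟨y₁ ⊓ y₂ - z₁ ⊔ z₂,
        ⟨y₁ ⊓ y₂, hEinf _ hy₁ _ hy₂, z₁ ⊔ z₂, hEsup _ hz₁ _ hz₂,
          h₁0.trans le_sup_left, sup_le h₁x h₂x, le_inf hx₁ hx₂, rfl⟩,
        sub_le_sub inf_le_left le_sup_left, sub_le_sub inf_le_right le_sup_right⟩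
    · constructor
      · rintro d ⟨y, hy, z, hz, h0, hzx, hxy, rfl⟩
        exact sub_nonneg.mpr (hzx.trans hxy)
      · intro d hd
        have h1 : ∀ z ∈ E, 0 ≤ z → z ≤ x → z ≤ x - d := by
          intro z hz hz0 hzx
          have h2 : d + z ≤ x := by
            refine hinfl (d + z) ?_
            intro y hy hxy
            have h3 : d ≤ y - z := hd ⟨y, hy, z, hz, hz0, hzx, hxy, rfl⟩
            exact le_sub_iff_add_le.mp h3
          exact le_sub_iff_add_le'.mpr h2
        have h4 : x ≤ x - d := hsup x (x - d) hx0 h1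
        exact (le_sub_self_iff x).mp h4
  -- extract approximating pairs
  have hseq : ∀ n : ℕ, ∃ y z : G, y ∈ E ∧ z ∈ E ∧ 0 ≤ z ∧ z ≤ x ∧ x ≤ y ∧
      ν (y - z) < 1/((n:ℝ)+1) := by
    intro n
    have hpos : (0:ℝ) < 1/((n:ℝ)+1) := by positivity
    obtain ⟨y₀, hy₀E, hxy₀⟩ := hmaj x
    have hne : (ν '' {d | ∃ y ∈ E, ∃ z ∈ E, 0 ≤ z ∧ z ≤ x ∧ x ≤ y ∧ d = y - z}).Nonempty :=
      Set.Nonempty.image ν ⟨y₀ - 0, y₀, hy₀E, 0, hE0, le_rfl, hx0, hxy₀, rfl⟩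
    obtain ⟨r, hr, hrlt⟩ := exists_lt_of_csInf_lt hne (by rw [hD]; exact hpos)
    obtain ⟨dd, ⟨y, hy, z, hz, h0, hzx, hxy, rfl⟩, rfl⟩ := hr
    exact ⟨y, z, hy, hz, h0, hzx, hxy, hrlt⟩
  choose y' z' hy'E hz'E hz'0 hz'x hxy' hν' using hseq
  -- running sups and infs
  let zs : ℕ → G := fun n => Nat.rec (z' 0) (fun k acc => acc ⊔ z' (k+1)) n
  let ys : ℕ → G := fun n => Nat.rec (y' 0) (fun k acc => acc ⊓ y' (k+1)) n
  have hzs_succ : ∀ n, zs (n+1) = zs n ⊔ z' (n+1) := fun n => rfl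
  have hys_succ : ∀ n, ys (n+1) = ys n ⊓ y' (n+1) := fun n => rfl
  have hzsE : ∀ n, zs n ∈ E := by
    intro n; induction n with
    | zero => exact hz'E 0
    | succ k ih => rw [hzs_succ]; exact hEsup _ ih _ (hz'E (k+1))
  have hysE : ∀ n, ys n ∈ E := by
    intro n; induction n with
    | zero => exact hy'E 0
    | succ k ih => rw [hys_succ]; exact hEinf _ ih _ (hy'E (k+1))
  have hzsx : ∀ n, zs n ≤ x := by
    intro n; induction n with
    | zero => exact hz'x 0
    | succ k ih => rw [hzs_succ]; exact sup_le ih (hz'x (k+1))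
  have hxys : ∀ n, x ≤ ys n := by
    intro n; induction n with
    | zero => exact hxy' 0
    | succ k ih => rw [hys_succ]; exact le_inf ih (hxy' (k+1))
  have hzs0 : ∀ n, 0 ≤ zs n := by
    intro n; induction n with
    | zero => exact hz'0 0
    | succ k ih => rw [hzs_succ]; exact ih.trans le_sup_left
  have hys0 : ∀ n, 0 ≤ ys n := fun n => hx0.trans (hxys n)
  have hz'zs : ∀ n, z' n ≤ zs n := by
    intro n; cases n with
    | zero => exact le_rfl
    | succ k => rw [hzs_succ]; exact le_sup_right
  have hysy' : ∀ n, ys n ≤ y' n := by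
    intro n; cases n with
    | zero => exact le_rfl
    | succ k => rw [hys_succ]; exact inf_le_right
  have hzsmono : Monotone zs := by
    apply monotone_nat_of_le_succ
    intro n; rw [hzs_succ]; exact le_sup_left
  have hysanti : Antitone ys := by
    apply antitone_nat_of_succ_le
    intro n; rw [hys_succ]; exact inf_le_left
  -- norm bound on the gaps
  have hbound : ∀ n, ν (ys n - zs n) < 1/((n:ℝ)+1) := by
    intro n
    have h1 : ys n - zs n ≤ y' n - z' n := sub_le_sub (hysy' n) (hz'zs n)
    have h0 : 0 ≤ ys n - zs n := sub_nonneg.mpr ((hzsx n).trans (hxys n))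
    have h0' : 0 ≤ y' n - z' n := sub_nonneg.mpr ((hz'x n).trans (hxy' n))
    have h2 : ν (ys n - zs n) ≤ ν (y' n - z' n) := by
      refine hν_mono _ (hEsub _ (hysE n) _ (hzsE n)) _ (hEsub _ (hy'E n) _ (hz'E n)) ?_
      rw [abs_of_nonneg h0, abs_of_nonneg h0']
      exact h1
    exact h2.trans_lt (hν' n)
  -- bound for ρ
  have hρbound : ∀ v b : G, b ∈ E → 0 ≤ v → v ≤ b → 0 ≤ ρ v ∧ ρ v ≤ ν b := by
    intro v b hbE hv0 hvb
    have habs : |v| = v := abs_of_nonneg hv0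
    rw [hρ v, habs]
    have hub : ∀ r ∈ ν '' {z | z ∈ E ∧ 0 ≤ z ∧ z ≤ v}, r ≤ ν b := by
      rintro r ⟨w, ⟨hwE, hw0, hwv⟩, rfl⟩
      refine hν_mono w hwE b hbE ?_
      rw [abs_of_nonneg hw0, abs_of_nonneg (hv0.trans hvb)]
      exact hwv.trans hvb
    have hmem : (0:ℝ) ∈ ν '' {z | z ∈ E ∧ 0 ≤ z ∧ z ≤ v} := ⟨0, ⟨hE0, le_rfl, hv0⟩, hν0⟩
    exact ⟨le_csSup ⟨ν b, hub⟩ hmem, Real.sSup_le hub (hνnn b hbE)⟩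
  have hlim : Filter.Tendsto (fun n : ℕ => 1/((n:ℝ)+1)) Filter.atTop (nhds 0) :=
    tendsto_one_div_add_atTop_nhds_zero_nat
  -- key : only 0 lies below all gaps
  have hkey : ∀ v : G, 0 ≤ v → (∀ n, v ≤ ys n - zs n) → v = 0 := by
    intro v hv0 hvle
    rcases hv0.lt_or_eq with hlt | heq
    · exfalso
      obtain ⟨w, hwE, hw0, hwv⟩ := hdense v hlt
      have hwb : ∀ n : ℕ, ν w < 1/((n:ℝ)+1) := by
        intro n
        have h1 : ν w ≤ ν (ys n - zs n) := by
          refine hν_mono w hwE _ (hEsub _ (hysE n) _ (hzsE n)) ?_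
          rw [abs_of_nonneg hw0.le,
            abs_of_nonneg (sub_nonneg.mpr ((hzsx n).trans (hxys n)))]
          exact hwv.trans (hvle n)
        exact h1.trans_lt (hbound n)
      have hw0' : ν w ≤ 0 := by
        by_contra h
        push_neg at h
        obtain ⟨n, hn⟩ := exists_nat_one_div_lt h
        exact absurd (hwb n) (not_lt.mpr (by exact_mod_cast hn.le))
      have : w = 0 := (hν_zero w hwE).mp (le_antisymm hw0' (hνnn w hwE))
      exact absurd this (ne_of_gt hw0)
    · exact heq.symm
  constructor
  · refine ⟨zs, hzsE, hzs0, hzsmono, ?_, ?_⟩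
    · constructor
      · rintro _ ⟨n, rfl⟩; exact hzsx n
      · intro u hu
        have hzu : ∀ n, zs n ≤ u := fun n => hu ⟨n, rfl⟩
        have hv : x - x ⊓ u = 0 := by
          refine hkey _ (sub_nonneg.mpr inf_le_left) ?_
          intro n
          calc x - x ⊓ u ≤ x - zs n := sub_le_sub_left (le_inf (hzsx n) (hzu n)) x
            _ ≤ ys n - zs n := sub_le_sub_right (hxys n) _
        have h2 : x = x ⊓ u := sub_eq_zero.mp hv
        exact h2.le.trans inf_le_right
    · refine squeeze_zero (fun n => ?_) (fun n => ?_) hlim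
      · exact (hρbound (x - zs n) (ys n - zs n) (hEsub _ (hysE n) _ (hzsE n))
          (sub_nonneg.mpr (hzsx n)) (sub_le_sub_right (hxys n) _)).1
      · exact ((hρbound (x - zs n) (ys n - zs n) (hEsub _ (hysE n) _ (hzsE n))
          (sub_nonneg.mpr (hzsx n)) (sub_le_sub_right (hxys n) _)).2).trans (hbound n).le
  · refine ⟨ys, hysE, hys0, hysanti, ?_, ?_⟩
    · constructor
      · rintro _ ⟨n, rfl⟩; exact hxys n
      · intro u hu
        have hyu : ∀ n, u ≤ ys n := fun n => hu ⟨n, rfl⟩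
        have hv : u ⊔ x - x = 0 := by
          refine hkey _ (sub_nonneg.mpr le_sup_right) ?_
          intro n
          calc u ⊔ x - x ≤ ys n - x := sub_le_sub_right (sup_le (hyu n) (hxys n)) x
            _ ≤ ys n - zs n := sub_le_sub_left (hzsx n) _
        have h2 : u ⊔ x = x := sub_eq_zero.mp hv
        exact le_sup_left.trans h2.le
    · refine squeeze_zero (fun n => ?_) (fun n => ?_) hlim
      · exact (hρbound (ys n - x) (ys n - zs n) (hEsub _ (hysE n) _ (hzsE n))
          (sub_nonneg.mpr (hxys n)) (sub_le_sub_left (hzsx n) _)).1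
      · exact ((hρbound (ys n - x) (ys n - zs n) (hEsub _ (hysE n) _ (hzsE n))
          (sub_nonneg.mpr (hxys n)) (sub_le_sub_left (hzsx n) _)).2).trans (hbound n).le
end

section
/- Suppose the norm ν on E is order continuous and E is a KB-space, i.e., every increasing sequence (x_n) in E with 0 ≤ x_n and sup_n ν(x_n) < ∞ converges in ν-norm to some element of E. Then E^t is a KB-space with respect to ρ: every increasing sequence (x_n) in E^t with 0 ≤ x_n and sup_n ρ(x_n) < ∞ converges in ρ-norm to some element of E^t. -/
/-!
Order density and majorization make every `0 ≤ a` the supremum of the elements of `E` in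
`[0, a]` and the infimum of the elements of `E` above `a`; so the gaps `y - z` between elements
of `E` sandwiching `a` decrease to `0`, and order continuity of `ν` yields `z ∈ E` below `a`
with `ρ (a - z)` arbitrarily small. Approximating `xₙ` in this way and taking partial suprema
gives an increasing sequence `wₙ` in `E` with `ν wₙ ≤ ρ xₙ` bounded, which the KB property of
`E` sends to a limit `l ∈ E`. Finally `ρ (xₙ - l) ≤ ι (xₙ - wₙ) + ν (wₙ - l)`, and on `Eᵗ` we
may replace `ι` by `ρ`, so both terms tend to `0`.
-/

open Set Filter

-- The functionals `ρ` and `ι` of the statement are `innerNorm E ν` and `outerNorm E ν`.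
noncomputable def innerNorm {G : Type*} [Lattice G] [AddCommGroup G] (E : Set G) (ν : G → ℝ)
    (x : G) : ℝ :=
  sSup (ν '' {z | z ∈ E ∧ 0 ≤ z ∧ z ≤ |x|})

noncomputable def outerNorm {G : Type*} [Lattice G] [AddCommGroup G] (E : Set G) (ν : G → ℝ)
    (x : G) : ℝ :=
  sInf (ν '' {y | y ∈ E ∧ |x| ≤ y})

def sandwichGaps {G : Type*} [Lattice G] [AddCommGroup G] (E : Set G) (a : G) : Set G :=
  image2 (· - ·) {y | y ∈ E ∧ a ≤ y} {z | z ∈ E ∧ 0 ≤ z ∧ z ≤ a}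

section KBExtension

variable {G : Type*} [Lattice G] [AddCommGroup G] {E : AddSubgroup G} {ν : G → ℝ}

theorem sandwichGaps_subset {a : G} : sandwichGaps E a ⊆ E := by
  rintro _ ⟨y, ⟨hyE, -⟩, z, ⟨hzE, -⟩, rfl⟩
  exact sub_mem hyE hzE

theorem sandwichGaps_nonempty (hmaj : ∀ x : G, ∃ y ∈ E, x ≤ y) {a : G} (ha : 0 ≤ a) :
    (sandwichGaps E a).Nonempty :=
  let ⟨y, hyE, hay⟩ := hmaj a
  ⟨y - 0, mem_image2_of_mem ⟨hyE, hay⟩ ⟨zero_mem E, le_rfl, ha⟩⟩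

variable [AddLeftMono G]

theorem le_of_forall_mem_le (arch : ∀ x y : G, (∀ n : ℕ, n • x ≤ y) → x ≤ 0)
    (hdense : ∀ x : G, 0 < x → ∃ y ∈ E, 0 < y ∧ y ≤ x) {a b : G} (ha : 0 ≤ a)
    (h : ∀ z ∈ E, 0 ≤ z → z ≤ a → z ≤ b) : a ≤ b := by
  by_contra hab
  obtain ⟨w, hwE, hw0, hwd⟩ := hdense (a - a ⊓ b) (sub_pos.mpr (inf_lt_left.mpr hab))
  have hnw : ∀ n : ℕ, n • w ≤ a := by
    intro n
    induction n with
    | zero => simpa using ha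
    | succ n ih =>
      have hb : n • w ≤ b := h _ (AddSubgroup.nsmul_mem E hwE n) (nsmul_nonneg hw0.le n) ih
      calc (n + 1) • w = n • w + w := succ_nsmul w n
        _ ≤ a ⊓ b + (a - a ⊓ b) := add_le_add (le_inf ih hb) hwd
        _ = a := add_sub_cancel _ _
  exact hw0.not_ge (arch w a hnw)

theorem le_of_forall_le_mem (arch : ∀ x y : G, (∀ n : ℕ, n • x ≤ y) → x ≤ 0)
    (hdense : ∀ x : G, 0 < x → ∃ y ∈ E, 0 < y ∧ y ≤ x) (hmaj : ∀ x : G, ∃ y ∈ E, x ≤ y)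
    {a b : G} (h : ∀ y ∈ E, a ≤ y → b ≤ y) : b ≤ a := by
  obtain ⟨y₀, hy₀E, hay₀⟩ := hmaj a
  suffices y₀ - a ≤ y₀ - b from sub_le_sub_iff_left y₀ |>.mp this
  refine le_of_forall_mem_le arch hdense (sub_nonneg.mpr hay₀) fun z hzE _ hz => ?_
  have hb : b ≤ y₀ - z := h _ (sub_mem hy₀E hzE) (le_sub_comm.mp hz)
  exact le_sub_comm.mp hb

theorem directedOn_sandwichGaps (hEsup : SupClosed (E : Set G))
    (hEinf : InfClosed (E : Set G)) (a : G) : DirectedOn (· ≥ ·) (sandwichGaps E a) := by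
  rintro _ ⟨y₁, ⟨hy₁E, hay₁⟩, z₁, ⟨hz₁E, hz₁, hz₁a⟩, rfl⟩
    _ ⟨y₂, ⟨hy₂E, hay₂⟩, z₂, ⟨hz₂E, -, hz₂a⟩, rfl⟩
  refine ⟨y₁ ⊓ y₂ - z₁ ⊔ z₂, mem_image2_of_mem ⟨hEinf hy₁E hy₂E, le_inf hay₁ hay₂⟩
    ⟨hEsup hz₁E hz₂E, hz₁.trans le_sup_left, sup_le hz₁a hz₂a⟩, ?_, ?_⟩
  · exact sub_le_sub inf_le_left le_sup_left
  · exact sub_le_sub inf_le_right le_sup_right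

theorem isGLB_sandwichGaps (arch : ∀ x y : G, (∀ n : ℕ, n • x ≤ y) → x ≤ 0)
    (hdense : ∀ x : G, 0 < x → ∃ y ∈ E, 0 < y ∧ y ≤ x) (hmaj : ∀ x : G, ∃ y ∈ E, x ≤ y)
    {a : G} (ha : 0 ≤ a) : IsGLB (sandwichGaps E a) 0 := by
  refine ⟨?_, fun u hu => ?_⟩
  · rintro _ ⟨y, ⟨-, hay⟩, z, ⟨-, -, hza⟩, rfl⟩
    exact sub_nonneg.mpr (hza.trans hay)
  have hua : ∀ y ∈ E, a ≤ y → u + a ≤ y := fun y hyE hay => by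
    refine add_le_of_le_sub_left ?_
    refine le_of_forall_mem_le arch hdense ha fun z hzE hz hza => ?_
    exact le_sub_comm.mp (hu (mem_image2_of_mem ⟨hyE, hay⟩ ⟨hzE, hz, hza⟩))
  simpa using le_of_forall_le_mem arch hdense hmaj hua


theorem mem_upperBounds_image_of_abs_le (hν_mono : ∀ x ∈ E, ∀ y ∈ E, |x| ≤ |y| → ν x ≤ ν y)
    {x y : G} (hy : y ∈ E) (hxy : |x| ≤ y) :
    ν y ∈ upperBounds (ν '' {z | z ∈ (E : Set G) ∧ 0 ≤ z ∧ z ≤ |x|}) := by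
  rintro _ ⟨z, ⟨hzE, hz, hzx⟩, rfl⟩
  refine hν_mono z hzE y hy ?_
  rw [abs_of_nonneg hz, abs_of_nonneg ((abs_nonneg x).trans hxy)]
  exact hzx.trans hxy

theorem le_innerNorm (hmaj : ∀ x : G, ∃ y ∈ E, x ≤ y)
    (hν_mono : ∀ x ∈ E, ∀ y ∈ E, |x| ≤ |y| → ν x ≤ ν y) {x z : G} (hz : z ∈ E) (hz0 : 0 ≤ z)
    (hzx : z ≤ |x|) : ν z ≤ innerNorm E ν x :=
  let ⟨_, hyE, hxy⟩ := hmaj |x|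
  le_csSup ⟨_, mem_upperBounds_image_of_abs_le hν_mono hyE hxy⟩ ⟨z, ⟨hz, hz0, hzx⟩, rfl⟩

theorem innerNorm_le (hν_mono : ∀ x ∈ E, ∀ y ∈ E, |x| ≤ |y| → ν x ≤ ν y) {x y : G}
    (hy : y ∈ E) (hxy : |x| ≤ y) : innerNorm E ν x ≤ ν y :=
  csSup_le ⟨ν 0, 0, ⟨zero_mem E, le_rfl, abs_nonneg x⟩, rfl⟩
    (mem_upperBounds_image_of_abs_le hν_mono hy hxy)

theorem innerNorm_nonneg (hmaj : ∀ x : G, ∃ y ∈ E, x ≤ y)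
    (hν_add : ∀ x ∈ E, ∀ y ∈ E, ν (x + y) ≤ ν x + ν y)
    (hν_mono : ∀ x ∈ E, ∀ y ∈ E, |x| ≤ |y| → ν x ≤ ν y) (x : G) : 0 ≤ innerNorm E ν x := by
  have hν0 : 0 ≤ ν 0 := by simpa using hν_add 0 (zero_mem E) 0 (zero_mem E)
  exact hν0.trans (le_innerNorm hmaj hν_mono (zero_mem E) le_rfl (abs_nonneg x))

theorem innerNorm_mono (hmaj : ∀ x : G, ∃ y ∈ E, x ≤ y)
    (hν_mono : ∀ x ∈ E, ∀ y ∈ E, |x| ≤ |y| → ν x ≤ ν y) {x y : G} (h : |x| ≤ |y|) :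
    innerNorm E ν x ≤ innerNorm E ν y :=
  csSup_le ⟨ν 0, 0, ⟨zero_mem E, le_rfl, abs_nonneg x⟩, rfl⟩ fun _ ⟨_, ⟨hzE, hz, hzx⟩, h'⟩ =>
    h' ▸ le_innerNorm hmaj hν_mono hzE hz (hzx.trans h)

theorem innerNorm_add_le (hEsup : SupClosed (E : Set G)) (hmaj : ∀ x : G, ∃ y ∈ E, x ≤ y)
    (hν_add : ∀ x ∈ E, ∀ y ∈ E, ν (x + y) ≤ ν x + ν y)
    (hν_mono : ∀ x ∈ E, ∀ y ∈ E, |x| ≤ |y| → ν x ≤ ν y) (x : G) {u : G} (hu : u ∈ E) :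
    innerNorm E ν (x + u) ≤ outerNorm E ν x + ν u := by
  obtain ⟨y₀, hy₀E, hxy₀⟩ := hmaj |x|
  have habs : |u| ∈ E := hEsup hu (neg_mem hu)
  rw [← sub_le_iff_le_add]
  refine le_csInf ⟨ν y₀, y₀, ⟨hy₀E, hxy₀⟩, rfl⟩ ?_
  rintro _ ⟨y, ⟨hyE, hxy⟩, rfl⟩
  rw [sub_le_iff_le_add]
  calc innerNorm E ν (x + u) ≤ ν (y + |u|) :=
        innerNorm_le hν_mono (add_mem hyE habs) ((abs_add_le x u).trans (add_le_add_left hxy _))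
    _ ≤ ν y + ν |u| := hν_add y hyE _ habs
    _ ≤ ν y + ν u := add_le_add_right (hν_mono _ habs u hu (abs_abs u).le) _


theorem exists_innerNorm_sub_lt (arch : ∀ x y : G, (∀ n : ℕ, n • x ≤ y) → x ≤ 0)
    (hdense : ∀ x : G, 0 < x → ∃ y ∈ E, 0 < y ∧ y ≤ x) (hmaj : ∀ x : G, ∃ y ∈ E, x ≤ y)
    (hEsup : SupClosed (E : Set G)) (hEinf : InfClosed (E : Set G))
    (hν_mono : ∀ x ∈ E, ∀ y ∈ E, |x| ≤ |y| → ν x ≤ ν y)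
    (hoc : ∀ D : Set G, D.Nonempty → D ⊆ E → (∀ d ∈ D, 0 ≤ d) →
      DirectedOn (· ≥ ·) D → IsGLB D 0 → sInf (ν '' D) = 0)
    {a : G} (ha : 0 ≤ a) {ε : ℝ} (hε : 0 < ε) :
    ∃ z ∈ E, 0 ≤ z ∧ z ≤ a ∧ innerNorm E ν (a - z) < ε := by
  have hne := sandwichGaps_nonempty hmaj ha
  have hglb := isGLB_sandwichGaps arch hdense hmaj ha
  have hinf : sInf (ν '' sandwichGaps E a) = 0 :=
    hoc _ hne sandwichGaps_subset hglb.1 (directedOn_sandwichGaps hEsup hEinf a) hglb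
  obtain ⟨_, ⟨_, ⟨y, ⟨hyE, hay⟩, z, ⟨hzE, hz, hza⟩, rfl⟩, rfl⟩, hlt⟩ :=
    exists_lt_of_csInf_lt (hne.image ν) (hinf ▸ hε)
  refine ⟨z, hzE, hz, hza, lt_of_le_of_lt (innerNorm_le hν_mono (sub_mem hyE hzE) ?_) hlt⟩
  rw [abs_of_nonneg (sub_nonneg.mpr hza)]
  exact sub_le_sub_right hay z

theorem exists_monotone_tendsto_innerNorm_sub
    (arch : ∀ x y : G, (∀ n : ℕ, n • x ≤ y) → x ≤ 0)
    (hdense : ∀ x : G, 0 < x → ∃ y ∈ E, 0 < y ∧ y ≤ x) (hmaj : ∀ x : G, ∃ y ∈ E, x ≤ y)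
    (hEsup : SupClosed (E : Set G)) (hEinf : InfClosed (E : Set G))
    (hν_add : ∀ x ∈ E, ∀ y ∈ E, ν (x + y) ≤ ν x + ν y)
    (hν_mono : ∀ x ∈ E, ∀ y ∈ E, |x| ≤ |y| → ν x ≤ ν y)
    (hoc : ∀ D : Set G, D.Nonempty → D ⊆ E → (∀ d ∈ D, 0 ≤ d) →
      DirectedOn (· ≥ ·) D → IsGLB D 0 → sInf (ν '' D) = 0)
    {x : ℕ → G} (hx0 : ∀ n, 0 ≤ x n) (hx : Monotone x) :
    ∃ w : ℕ → G, Monotone w ∧ (∀ n, w n ∈ E) ∧ (∀ n, 0 ≤ w n) ∧ (∀ n, w n ≤ x n) ∧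
      Tendsto (fun n => innerNorm E ν (x n - w n)) atTop (nhds 0) := by
  choose z hzE hz0 hzx hz using fun n : ℕ =>
    exists_innerNorm_sub_lt arch hdense hmaj hEsup hEinf hν_mono hoc (hx0 n)
      (Nat.one_div_pos_of_nat (n := n))
  -- partial suprema make the approximants monotone without losing accuracy
  have hwE : ∀ n, partialSups z n ∈ E := fun n =>
    hEsup.finsetSup'_mem Finset.nonempty_Iic fun k _ => hzE k
  have hwx : ∀ n, partialSups z n ≤ x n := fun n =>
    partialSups_le z n (x n) fun k hk => (hzx k).trans (hx hk)
  have hxw : ∀ n, innerNorm E ν (x n - partialSups z n) ≤ 1 / (n + 1) := fun n => by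
    refine (innerNorm_mono hmaj hν_mono ?_).trans (hz n).le
    rw [abs_of_nonneg (sub_nonneg.mpr (hwx n)), abs_of_nonneg (sub_nonneg.mpr (hzx n))]
    exact sub_le_sub_left (le_partialSups z n) _
  exact ⟨partialSups z, (partialSups z).monotone, hwE, fun n => (hz0 n).trans (le_partialSups z n),
    hwx, squeeze_zero (fun n => innerNorm_nonneg hmaj hν_add hν_mono _) hxw
      tendsto_one_div_add_atTop_nhds_zero_nat⟩

end KBExtension

theorem stmt4_general
    {G : Type*} [Lattice G] [AddCommGroup G] [Module ℝ G]
    [CovariantClass G G (· + ·) (· ≤ ·)]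
    (arch : ∀ x y : G, (∀ n : ℕ, n • x ≤ y) → x ≤ 0)
    (E : Set G)
    (hE0 : (0 : G) ∈ E)
    (hEadd : ∀ x ∈ E, ∀ y ∈ E, x + y ∈ E)
    (hEsmul : ∀ (c : ℝ), ∀ x ∈ E, c • x ∈ E)
    (hEsup : ∀ x ∈ E, ∀ y ∈ E, x ⊔ y ∈ E)
    (hEinf : ∀ x ∈ E, ∀ y ∈ E, x ⊓ y ∈ E)
    (hdense : ∀ x : G, 0 < x → ∃ y ∈ E, 0 < y ∧ y ≤ x)
    (hmaj : ∀ x : G, ∃ y ∈ E, x ≤ y)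
    (ν : G → ℝ)
    (hν_add : ∀ x ∈ E, ∀ y ∈ E, ν (x + y) ≤ ν x + ν y)
    (hν_mono : ∀ x ∈ E, ∀ y ∈ E, |x| ≤ |y| → ν x ≤ ν y)
    (ρ : G → ℝ)
    (hρ : ∀ x : G, ρ x = sSup (ν '' {z | z ∈ E ∧ 0 ≤ z ∧ z ≤ |x|}))
    (ι : G → ℝ)
    (hι : ∀ x : G, ι x = sInf (ν '' {y | y ∈ E ∧ |x| ≤ y}))
    (Et : Set G)
    (hEEt : E ⊆ Et)
    (hEtadd : ∀ x ∈ Et, ∀ y ∈ Et, x + y ∈ Et)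
    (hEtsmul : ∀ (c : ℝ), ∀ x ∈ Et, c • x ∈ Et)
    (hEt : ∀ x ∈ Et, ι x = ρ x)
    (hoc : ∀ D : Set G, D.Nonempty → D ⊆ E → (∀ d ∈ D, 0 ≤ d) →
      DirectedOn (· ≥ ·) D → IsGLB D 0 → sInf (ν '' D) = 0)
    (hKB : ∀ x : ℕ → G, (∀ n, x n ∈ E) → (∀ n, 0 ≤ x n) → Monotone x →
      BddAbove (Set.range fun n => ν (x n)) →
      ∃ l ∈ E, Filter.Tendsto (fun n => ν (x n - l)) Filter.atTop (nhds 0)) :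
    ∀ x : ℕ → G, (∀ n, x n ∈ Et) → (∀ n, 0 ≤ x n) → Monotone x →
      BddAbove (Set.range fun n => ρ (x n)) →
      ∃ l ∈ Et, Filter.Tendsto (fun n => ρ (x n - l)) Filter.atTop (nhds 0) := by
  obtain ⟨E, rfl⟩ : ∃ S : AddSubgroup G, (S : Set G) = E :=
    ⟨{ carrier := E, zero_mem' := hE0, add_mem' := fun hx hy => hEadd _ hx _ hy
       neg_mem' := fun hx => by simpa using hEsmul (-1) _ hx }, rfl⟩
  obtain rfl : ρ = innerNorm E ν := funext hρ
  obtain rfl : ι = outerNorm E ν := funext hι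
  intro x hxEt hx0 hx ⟨M, hM⟩
  obtain ⟨w, hw, hwE, hw0, hwx, hxw⟩ := exists_monotone_tendsto_innerNorm_sub arch hdense hmaj
    hEsup hEinf hν_add hν_mono hoc hx0 hx
  have hνw : BddAbove (range fun n => ν (w n)) := ⟨M, forall_mem_range.2 fun n =>
    (le_innerNorm hmaj hν_mono (hwE n) (hw0 n) ((hwx n).trans (le_abs_self _))).trans
      (hM (mem_range_self n))⟩
  obtain ⟨l, hlE, hl⟩ := hKB w hwE hw0 hw hνw
  refine ⟨l, hEEt hlE, squeeze_zero (fun n => innerNorm_nonneg hmaj hν_add hν_mono _)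
    (fun n => ?_) (by simpa using hxw.add hl)⟩
  have hdiff : x n - w n ∈ Et := by
    simpa [sub_eq_add_neg] using hEtadd _ (hxEt n) _ (hEtsmul (-1) _ (hEEt (hwE n)))
  calc innerNorm E ν (x n - l) = innerNorm E ν (x n - w n + (w n - l)) := by
        rw [sub_add_sub_cancel]
    _ ≤ outerNorm E ν (x n - w n) + ν (w n - l) :=
        innerNorm_add_le hEsup hmaj hν_add hν_mono _ (sub_mem (hwE n) hlE)
    _ = innerNorm E ν (x n - w n) + ν (w n - l) := by rw [hEt _ hdiff]

theorem stmt4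
    {G : Type*} [Lattice G] [AddCommGroup G] [Module ℝ G]
    [CovariantClass G G (· + ·) (· ≤ ·)] [PosSMulMono ℝ G]
    (arch : ∀ x y : G, (∀ n : ℕ, n • x ≤ y) → x ≤ 0)
    (E : Set G)
    (hE0 : (0 : G) ∈ E)
    (hEadd : ∀ x ∈ E, ∀ y ∈ E, x + y ∈ E)
    (hEsmul : ∀ (c : ℝ), ∀ x ∈ E, c • x ∈ E)
    (hEsup : ∀ x ∈ E, ∀ y ∈ E, x ⊔ y ∈ E)
    (hEinf : ∀ x ∈ E, ∀ y ∈ E, x ⊓ y ∈ E)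
    (hdense : ∀ x : G, 0 < x → ∃ y ∈ E, 0 < y ∧ y ≤ x)
    (hmaj : ∀ x : G, ∃ y ∈ E, x ≤ y)
    (ν : G → ℝ)
    (hν_zero : ∀ x ∈ E, (ν x = 0 ↔ x = 0))
    (hν_smul : ∀ (c : ℝ), ∀ x ∈ E, ν (c • x) = |c| * ν x)
    (hν_add : ∀ x ∈ E, ∀ y ∈ E, ν (x + y) ≤ ν x + ν y)
    (hν_mono : ∀ x ∈ E, ∀ y ∈ E, |x| ≤ |y| → ν x ≤ ν y)
    (ρ : G → ℝ)
    (hρ : ∀ x : G, ρ x = sSup (ν '' {z | z ∈ E ∧ 0 ≤ z ∧ z ≤ |x|}))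
    (ι : G → ℝ)
    (hι : ∀ x : G, ι x = sInf (ν '' {y | y ∈ E ∧ |x| ≤ y}))
    (Et : Set G)
    (hEEt : E ⊆ Et)
    (hEtadd : ∀ x ∈ Et, ∀ y ∈ Et, x + y ∈ Et)
    (hEtsmul : ∀ (c : ℝ), ∀ x ∈ Et, c • x ∈ Et)
    (hEtsup : ∀ x ∈ Et, ∀ y ∈ Et, x ⊔ y ∈ Et)
    (hEtinf : ∀ x ∈ Et, ∀ y ∈ Et, x ⊓ y ∈ Et)
    (hEt : ∀ x ∈ Et, ι x = ρ x)
    (hoc : ∀ D : Set G, D.Nonempty → D ⊆ E → (∀ d ∈ D, 0 ≤ d) →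
      DirectedOn (· ≥ ·) D → IsGLB D 0 → sInf (ν '' D) = 0)
    (hKB : ∀ x : ℕ → G, (∀ n, x n ∈ E) → (∀ n, 0 ≤ x n) → Monotone x →
      BddAbove (Set.range fun n => ν (x n)) →
      ∃ l ∈ E, Filter.Tendsto (fun n => ν (x n - l)) Filter.atTop (nhds 0)) :
    ∀ x : ℕ → G, (∀ n, x n ∈ Et) → (∀ n, 0 ≤ x n) → Monotone x →
      BddAbove (Set.range fun n => ρ (x n)) →
      ∃ l ∈ Et, Filter.Tendsto (fun n => ρ (x n - l)) Filter.atTop (nhds 0) :=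
  stmt4_general arch E hE0 hEadd hEsmul hEsup hEinf hdense hmaj ν hν_add hν_mono ρ hρ ι hι Et hEEt
    hEtadd hEtsmul hEt hoc hKB
end

section
/- Suppose the norm ν on E is order continuous and E is an AL-space, i.e., ν(x + y) = ν(x) + ν(y) whenever x, y ∈ E, 0 ≤ x, 0 ≤ y and x ∧ y = 0. Then E^t is an AL-space with respect to ρ: for all x, y ∈ E^t with 0 ≤ x, 0 ≤ y and x ∧ y = 0 one has ρ(x + y) = ρ(x) + ρ(y). -/
/-!
For `z ∈ E` with `0 ≤ z ≤ x + y`, the Riesz decomposition `z = z ⊓ x + (z - z ⊓ x)` splits `z`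
into positive parts below `x` and below `y`, both in `E^t`. Bounding `ν z` through upper
majorants in `E` of the two parts gives `ν z ≤ ι a + ι b = ρ a + ρ b ≤ ρ x + ρ y`, so `ρ` is
subadditive on `E^t`. Conversely, minorants `z₁ ≤ x`, `z₂ ≤ y` in `E` of disjoint `x`, `y` are
disjoint, so the AL property of `ν` gives `ν z₁ + ν z₂ = ν (z₁ + z₂) ≤ ρ (x + y)`.
-/

section LatticeOrderedGroup

variable {G : Type*} [Lattice G] [AddCommGroup G] [AddLeftMono G]

lemma sub_inf_le_of_le_add {x y z : G} (hy : 0 ≤ y) (h : z ≤ x + y) : z - z ⊓ x ≤ y := by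
  rw [sub_inf, sub_self]
  exact sup_le hy (sub_le_iff_le_add'.2 h)

noncomputable def lowerNorm (ν : G → ℝ) (E : Set G) (x : G) : ℝ :=
  sSup (ν '' {z | z ∈ E ∧ 0 ≤ z ∧ z ≤ |x|})

noncomputable def upperNorm (ν : G → ℝ) (E : Set G) (x : G) : ℝ :=
  sInf (ν '' {y | y ∈ E ∧ |x| ≤ y})

variable {ν : G → ℝ} {E : Set G}

lemma bddAbove_lowerNorm_set (hmaj : ∀ x : G, ∃ y ∈ E, x ≤ y)
    (hν_mono : ∀ x ∈ E, ∀ y ∈ E, |x| ≤ |y| → ν x ≤ ν y) (x : G) :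
    BddAbove (ν '' {z | z ∈ E ∧ 0 ≤ z ∧ z ≤ |x|}) := by
  obtain ⟨m, hmE, hm⟩ := hmaj |x|
  refine ⟨ν m, ?_⟩
  rintro _ ⟨z, ⟨hzE, hz0, hzx⟩, rfl⟩
  apply hν_mono z hzE m hmE
  rw [abs_of_nonneg hz0, abs_of_nonneg ((abs_nonneg x).trans hm)]
  exact hzx.trans hm

lemma le_lowerNorm (hmaj : ∀ x : G, ∃ y ∈ E, x ≤ y)
    (hν_mono : ∀ x ∈ E, ∀ y ∈ E, |x| ≤ |y| → ν x ≤ ν y)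
    {x z : G} (hzE : z ∈ E) (hz0 : 0 ≤ z) (hzx : z ≤ |x|) : ν z ≤ lowerNorm ν E x :=
  le_csSup (bddAbove_lowerNorm_set hmaj hν_mono x) ⟨z, ⟨hzE, hz0, hzx⟩, rfl⟩

lemma lowerNorm_mono (hE0 : (0 : G) ∈ E) (hmaj : ∀ x : G, ∃ y ∈ E, x ≤ y)
    (hν_mono : ∀ x ∈ E, ∀ y ∈ E, |x| ≤ |y| → ν x ≤ ν y)
    {a b : G} (hab : |a| ≤ |b|) : lowerNorm ν E a ≤ lowerNorm ν E b :=
  csSup_le_csSup (bddAbove_lowerNorm_set hmaj hν_mono b)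
    ⟨ν 0, 0, ⟨hE0, le_rfl, abs_nonneg a⟩, rfl⟩
    (Set.image_mono fun _ ⟨hzE, hz0, hza⟩ ↦ ⟨hzE, hz0, hza.trans hab⟩)

lemma le_upperNorm_add (hmaj : ∀ x : G, ∃ y ∈ E, x ≤ y)
    (hEadd : ∀ x ∈ E, ∀ y ∈ E, x + y ∈ E)
    (hν_add : ∀ x ∈ E, ∀ y ∈ E, ν (x + y) ≤ ν x + ν y)
    (hν_mono : ∀ x ∈ E, ∀ y ∈ E, |x| ≤ |y| → ν x ≤ ν y)
    {a b z : G} (hzE : z ∈ E) (hz0 : 0 ≤ z) (hzab : z ≤ |a| + |b|) :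
    ν z ≤ upperNorm ν E a + upperNorm ν E b := by
  have : ∀ w : G, Nonempty {y | y ∈ E ∧ |w| ≤ y} := fun w ↦
    let ⟨m, hmE, hm⟩ := hmaj |w|
    ⟨⟨m, hmE, hm⟩⟩
  rw [upperNorm, upperNorm, sInf_image', sInf_image']
  refine le_ciInf_add_ciInf fun ⟨u, huE, hau⟩ ⟨v, hvE, hbv⟩ ↦ ?_
  have hzuv : z ≤ u + v := hzab.trans (add_le_add hau hbv)
  calc ν z ≤ ν (u + v) := hν_mono z hzE _ (hEadd u huE v hvE) <| by
        rwa [abs_of_nonneg hz0, abs_of_nonneg (hz0.trans hzuv)]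
    _ ≤ ν u + ν v := hν_add u huE v hvE

lemma lowerNorm_add_le {Et : Set G} (hE0 : (0 : G) ∈ E) (hmaj : ∀ x : G, ∃ y ∈ E, x ≤ y)
    (hEadd : ∀ x ∈ E, ∀ y ∈ E, x + y ∈ E)
    (hν_add : ∀ x ∈ E, ∀ y ∈ E, ν (x + y) ≤ ν x + ν y)
    (hν_mono : ∀ x ∈ E, ∀ y ∈ E, |x| ≤ |y| → ν x ≤ ν y)
    (hEEt : E ⊆ Et) (hEtsub : ∀ x ∈ Et, ∀ y ∈ Et, x - y ∈ Et)
    (hEtinf : ∀ x ∈ Et, ∀ y ∈ Et, x ⊓ y ∈ Et)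
    (hEt : ∀ x ∈ Et, upperNorm ν E x = lowerNorm ν E x)
    {x y : G} (hx : x ∈ Et) (hx0 : 0 ≤ x) (hy0 : 0 ≤ y) :
    lowerNorm ν E (x + y) ≤ lowerNorm ν E x + lowerNorm ν E y := by
  refine csSup_le ⟨ν 0, 0, ⟨hE0, le_rfl, abs_nonneg _⟩, rfl⟩ ?_
  rintro _ ⟨z, ⟨hzE, hz0, hzxy⟩, rfl⟩
  rw [abs_of_nonneg (add_nonneg hx0 hy0)] at hzxy
  have ha : z ⊓ x ∈ Et := hEtinf z (hEEt hzE) x hx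
  have hb : z - z ⊓ x ∈ Et := hEtsub z (hEEt hzE) _ ha
  have ha0 : 0 ≤ z ⊓ x := le_inf hz0 hx0
  have hb0 : 0 ≤ z - z ⊓ x := sub_nonneg.2 inf_le_left
  have hax : |z ⊓ x| ≤ |x| := by
    rw [abs_of_nonneg ha0, abs_of_nonneg hx0]; exact inf_le_right
  have hby : |z - z ⊓ x| ≤ |y| := by
    rw [abs_of_nonneg hb0, abs_of_nonneg hy0]; exact sub_inf_le_of_le_add hy0 hzxy
  calc ν z ≤ upperNorm ν E (z ⊓ x) + upperNorm ν E (z - z ⊓ x) :=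
        le_upperNorm_add hmaj hEadd hν_add hν_mono hzE hz0 <| by
          rw [abs_of_nonneg ha0, abs_of_nonneg hb0, add_sub_cancel]
    _ = lowerNorm ν E (z ⊓ x) + lowerNorm ν E (z - z ⊓ x) := by rw [hEt _ ha, hEt _ hb]
    _ ≤ lowerNorm ν E x + lowerNorm ν E y :=
        add_le_add (lowerNorm_mono hE0 hmaj hν_mono hax) (lowerNorm_mono hE0 hmaj hν_mono hby)

lemma add_le_lowerNorm_add_of_inf_eq_zero (hE0 : (0 : G) ∈ E) (hmaj : ∀ x : G, ∃ y ∈ E, x ≤ y)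
    (hEadd : ∀ x ∈ E, ∀ y ∈ E, x + y ∈ E)
    (hν_mono : ∀ x ∈ E, ∀ y ∈ E, |x| ≤ |y| → ν x ≤ ν y)
    (hAL : ∀ x ∈ E, ∀ y ∈ E, 0 ≤ x → 0 ≤ y → x ⊓ y = 0 → ν (x + y) = ν x + ν y)
    {x y : G} (hx0 : 0 ≤ x) (hy0 : 0 ≤ y) (hxy : x ⊓ y = 0) :
    lowerNorm ν E x + lowerNorm ν E y ≤ lowerNorm ν E (x + y) := by
  have : ∀ w : G, Nonempty {z | z ∈ E ∧ 0 ≤ z ∧ z ≤ |w|} := fun w ↦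
    ⟨⟨0, hE0, le_rfl, abs_nonneg w⟩⟩
  rw [lowerNorm, lowerNorm, sSup_image', sSup_image']
  refine ciSup_add_ciSup_le fun ⟨z₁, hz₁E, hz₁0, hz₁x⟩ ⟨z₂, hz₂E, hz₂0, hz₂y⟩ ↦ ?_
  rw [abs_of_nonneg hx0] at hz₁x
  rw [abs_of_nonneg hy0] at hz₂y
  have hz₁z₂ : z₁ ⊓ z₂ = 0 :=
    le_antisymm (hxy ▸ inf_le_inf hz₁x hz₂y) (le_inf hz₁0 hz₂0)
  rw [← hAL z₁ hz₁E z₂ hz₂E hz₁0 hz₂0 hz₁z₂]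
  refine le_lowerNorm hmaj hν_mono (hEadd z₁ hz₁E z₂ hz₂E) (add_nonneg hz₁0 hz₂0) ?_
  rw [abs_of_nonneg (add_nonneg hx0 hy0)]
  exact add_le_add hz₁x hz₂y

end LatticeOrderedGroup

theorem stmt5_general
    {G : Type*} [Lattice G] [AddCommGroup G] [Module ℝ G]
    [CovariantClass G G (· + ·) (· ≤ ·)]
    (E : Set G)
    (hE0 : (0 : G) ∈ E)
    (hEadd : ∀ x ∈ E, ∀ y ∈ E, x + y ∈ E)
    (hmaj : ∀ x : G, ∃ y ∈ E, x ≤ y)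
    (ν : G → ℝ)
    (hν_add : ∀ x ∈ E, ∀ y ∈ E, ν (x + y) ≤ ν x + ν y)
    (hν_mono : ∀ x ∈ E, ∀ y ∈ E, |x| ≤ |y| → ν x ≤ ν y)
    (ρ : G → ℝ)
    (hρ : ∀ x : G, ρ x = sSup (ν '' {z | z ∈ E ∧ 0 ≤ z ∧ z ≤ |x|}))
    (ι : G → ℝ)
    (hι : ∀ x : G, ι x = sInf (ν '' {y | y ∈ E ∧ |x| ≤ y}))
    (Et : Set G)
    (hEEt : E ⊆ Et)
    (hEtadd : ∀ x ∈ Et, ∀ y ∈ Et, x + y ∈ Et)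
    (hEtsmul : ∀ (c : ℝ), ∀ x ∈ Et, c • x ∈ Et)
    (hEtinf : ∀ x ∈ Et, ∀ y ∈ Et, x ⊓ y ∈ Et)
    (hEt : ∀ x ∈ Et, ι x = ρ x)
    (hAL : ∀ x ∈ E, ∀ y ∈ E, 0 ≤ x → 0 ≤ y → x ⊓ y = 0 → ν (x + y) = ν x + ν y) :
    ∀ x ∈ Et, ∀ y ∈ Et, 0 ≤ x → 0 ≤ y → x ⊓ y = 0 → ρ (x + y) = ρ x + ρ y := by
  intro x hx y _ hx0 hy0 hxy
  obtain rfl : ρ = lowerNorm ν E := funext hρ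
  obtain rfl : ι = upperNorm ν E := funext hι
  have hEtsub : ∀ a ∈ Et, ∀ b ∈ Et, a - b ∈ Et := fun a ha b hb ↦ by
    simpa [sub_eq_add_neg] using hEtadd a ha _ (hEtsmul (-1) b hb)
  exact le_antisymm
    (lowerNorm_add_le hE0 hmaj hEadd hν_add hν_mono hEEt hEtsub hEtinf hEt hx hx0 hy0)
    (add_le_lowerNorm_add_of_inf_eq_zero hE0 hmaj hEadd hν_mono hAL hx0 hy0 hxy)

theorem stmt5
    {G : Type*} [Lattice G] [AddCommGroup G] [Module ℝ G]
    [CovariantClass G G (· + ·) (· ≤ ·)] [PosSMulMono ℝ G]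
    (arch : ∀ x y : G, (∀ n : ℕ, n • x ≤ y) → x ≤ 0)
    (E : Set G)
    (hE0 : (0 : G) ∈ E)
    (hEadd : ∀ x ∈ E, ∀ y ∈ E, x + y ∈ E)
    (hEsmul : ∀ (c : ℝ), ∀ x ∈ E, c • x ∈ E)
    (hEsup : ∀ x ∈ E, ∀ y ∈ E, x ⊔ y ∈ E)
    (hEinf : ∀ x ∈ E, ∀ y ∈ E, x ⊓ y ∈ E)
    (hdense : ∀ x : G, 0 < x → ∃ y ∈ E, 0 < y ∧ y ≤ x)
    (hmaj : ∀ x : G, ∃ y ∈ E, x ≤ y)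
    (ν : G → ℝ)
    (hν_zero : ∀ x ∈ E, (ν x = 0 ↔ x = 0))
    (hν_smul : ∀ (c : ℝ), ∀ x ∈ E, ν (c • x) = |c| * ν x)
    (hν_add : ∀ x ∈ E, ∀ y ∈ E, ν (x + y) ≤ ν x + ν y)
    (hν_mono : ∀ x ∈ E, ∀ y ∈ E, |x| ≤ |y| → ν x ≤ ν y)
    (ρ : G → ℝ)
    (hρ : ∀ x : G, ρ x = sSup (ν '' {z | z ∈ E ∧ 0 ≤ z ∧ z ≤ |x|}))
    (ι : G → ℝ)
    (hι : ∀ x : G, ι x = sInf (ν '' {y | y ∈ E ∧ |x| ≤ y}))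
    (Et : Set G)
    (hEEt : E ⊆ Et)
    (hEtadd : ∀ x ∈ Et, ∀ y ∈ Et, x + y ∈ Et)
    (hEtsmul : ∀ (c : ℝ), ∀ x ∈ Et, c • x ∈ Et)
    (hEtsup : ∀ x ∈ Et, ∀ y ∈ Et, x ⊔ y ∈ Et)
    (hEtinf : ∀ x ∈ Et, ∀ y ∈ Et, x ⊓ y ∈ Et)
    (hEt : ∀ x ∈ Et, ι x = ρ x)
    (hoc : ∀ D : Set G, D.Nonempty → D ⊆ E → (∀ d ∈ D, 0 ≤ d) →
      DirectedOn (· ≥ ·) D → IsGLB D 0 → sInf (ν '' D) = 0)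
    (hAL : ∀ x ∈ E, ∀ y ∈ E, 0 ≤ x → 0 ≤ y → x ⊓ y = 0 → ν (x + y) = ν x + ν y) :
    ∀ x ∈ Et, ∀ y ∈ Et, 0 ≤ x → 0 ≤ y → x ⊓ y = 0 → ρ (x + y) = ρ x + ρ y :=
  stmt5_general E hE0 hEadd hmaj ν hν_add hν_mono ρ hρ ι hι Et hEEt hEtadd hEtsmul hEtinf hEt hAL
end

section
/- Let T : E → F be a positive linear operator (x ≥ 0 implies T(x) ≥ 0). Then there exists a positive linear operator S : G → F such that S(y) = T(y) for all y ∈ E. -/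
/-!
Kantorovich's extension argument. By Zorn's lemma it suffices to extend a positive partial map `f`
with majorizing domain to one more vector `y`, i.e. to choose the value `c` it takes at `y`.
Positivity of the extension `x + t • y ↦ f x + t • c` amounts to `f x ≤ c` whenever `x ≤ y` and
`c ≤ f x` whenever `y ≤ x`; the two sets of values are nonempty because the domain is majorizing,
they are ordered because `f` is monotone, and Dedekind completeness of the codomain supplies `c`.
-/

def Submodule.IsMajorizing {R M : Type*} [Semiring R] [AddCommMonoid M] [Module R M] [Preorder M]
    (p : Submodule R M) : Prop :=
  ∀ x, ∃ y ∈ p, x ≤ y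

theorem Submodule.IsMajorizing.mono {R M : Type*} [Semiring R] [AddCommMonoid M] [Module R M]
    [Preorder M] {p q : Submodule R M} (hp : p.IsMajorizing) (hpq : p ≤ q) : q.IsMajorizing :=
  fun x ↦ (hp x).imp fun _ ⟨hy, hxy⟩ ↦ ⟨hpq hy, hxy⟩

namespace LinearPMap

theorem lt_supSpanSingleton {K E F : Type*} [DivisionRing K] [AddCommGroup E] [Module K E]
    [AddCommGroup F] [Module K F] (f : E →ₗ.[K] F) {x : E} (y : F) (hx : x ∉ f.domain) :
    f < f.supSpanSingleton x y hx :=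
  lt_iff_le_not_ge.2 ⟨f.left_le_sup _ _, fun H ↦
    hx (H.1 (Submodule.mem_sup_right (Submodule.mem_span_singleton_self x)))⟩

theorem apply_le_apply_of_nonneg {R V W : Type*} [Ring R]
    [AddCommGroup V] [PartialOrder V] [IsOrderedAddMonoid V] [Module R V]
    [AddCommGroup W] [PartialOrder W] [IsOrderedAddMonoid W] [Module R W]
    {f : V →ₗ.[R] W} (hf : ∀ x : f.domain, 0 ≤ (x : V) → 0 ≤ f x)
    {x₁ x₂ : f.domain} (h : (x₁ : V) ≤ x₂) : f x₁ ≤ f x₂ := by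
  have := hf (x₂ - x₁) (by simpa [sub_nonneg] using h)
  rwa [map_sub, sub_nonneg] at this

theorem sSup_nonneg {R V W : Type*} [Ring R] [AddCommGroup V] [Module R V] [LE V]
    [AddCommGroup W] [Module R W] [LE W]
    {c : Set (V →ₗ.[R] W)} (hne : c.Nonempty) (hc : DirectedOn (· ≤ ·) c)
    (hpos : ∀ g ∈ c, ∀ x : g.domain, 0 ≤ (x : V) → 0 ≤ g x) :
    ∀ x : (LinearPMap.sSup c hc).domain, 0 ≤ (x : V) → 0 ≤ LinearPMap.sSup c hc x := by
  rintro ⟨x, hx⟩ hx₀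
  obtain ⟨g, hg, hxg⟩ := (mem_domain_sSup_iff hne hc).1 hx
  rw [LinearPMap.sSup_apply hc hg ⟨x, hxg⟩]
  exact hpos g hg ⟨x, hxg⟩ hx₀

theorem exists_between_of_majorizing {R V W : Type*} [Ring R]
    [AddCommGroup V] [PartialOrder V] [IsOrderedAddMonoid V] [Module R V]
    [AddCommGroup W] [ConditionallyCompleteLattice W] [IsOrderedAddMonoid W] [Module R W]
    {f : V →ₗ.[R] W} (hf : ∀ x : f.domain, 0 ≤ (x : V) → 0 ≤ f x)
    (hmaj : f.domain.IsMajorizing) (y : V) :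
    ∃ c : W, (∀ x : f.domain, (x : V) ≤ y → f x ≤ c) ∧ ∀ x : f.domain, y ≤ x → c ≤ f x := by
  have hL : (f '' {x | (x : V) ≤ y}).Nonempty := by
    obtain ⟨x, hx, hyx⟩ := hmaj (-y)
    exact ⟨_, ⟨-⟨x, hx⟩, neg_le.1 hyx, rfl⟩⟩
  have hU : (f '' {x | y ≤ (x : V)}).Nonempty := by
    obtain ⟨x, hx, hyx⟩ := hmaj y
    exact ⟨_, ⟨⟨x, hx⟩, hyx, rfl⟩⟩
  obtain ⟨c, hcL, hcU⟩ := exists_between_of_forall_le hL hU <| by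
    rintro _ ⟨x₁, hx₁, rfl⟩ _ ⟨x₂, hx₂, rfl⟩
    exact apply_le_apply_of_nonneg hf (le_trans hx₁ hx₂)
  exact ⟨c, fun x hx ↦ hcL ⟨x, hx, rfl⟩, fun x hx ↦ hcU ⟨x, hx, rfl⟩⟩

section Real

variable {V W : Type*}
  [AddCommGroup V] [PartialOrder V] [IsOrderedAddMonoid V] [Module ℝ V] [PosSMulMono ℝ V]
  [AddCommGroup W] [PartialOrder W] [IsOrderedAddMonoid W] [Module ℝ W] [PosSMulMono ℝ W]

theorem nonneg_add_smul_of_forall_le {f : V →ₗ.[ℝ] W} {y : V} {c : W}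
    (hc : ∀ x : f.domain, (x : V) ≤ y → f x ≤ c)
    (x : f.domain) {t : ℝ} (ht : 0 < t) (hx : 0 ≤ (x : V) + t • y) : 0 ≤ f x + t • c := by
  have hxy : -(t⁻¹ • (x : V)) ≤ y := by
    rw [← smul_neg, inv_smul_le_iff_of_pos ht]
    exact neg_le_iff_add_nonneg'.2 hx
  have := hc (-(t⁻¹ • x)) hxy
  rw [map_neg, map_smul, ← smul_neg, inv_smul_le_iff_of_pos ht] at this
  exact neg_le_iff_add_nonneg'.1 this

theorem supSpanSingleton_nonneg {f : V →ₗ.[ℝ] W} (hf : ∀ x : f.domain, 0 ≤ (x : V) → 0 ≤ f x)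
    {y : V} (hy : y ∉ f.domain) {c : W} (hcL : ∀ x : f.domain, (x : V) ≤ y → f x ≤ c)
    (hcU : ∀ x : f.domain, y ≤ x → c ≤ f x) :
    ∀ z : (f.supSpanSingleton y c hy).domain, 0 ≤ (z : V) → 0 ≤ f.supSpanSingleton y c hy z := by
  rintro ⟨z, hz⟩ hz₀
  obtain ⟨x, hx, _, hty, rfl⟩ := Submodule.mem_sup.1 hz
  obtain ⟨t, rfl⟩ := Submodule.mem_span_singleton.1 hty
  rw [supSpanSingleton_apply_mk _ _ _ _ _ hx, RingHom.id_apply]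
  rcases lt_trichotomy t 0 with ht | rfl | ht
  · -- the case `t < 0` is the case `t > 0` for `-y` and `-c`
    have hcU' : ∀ x : f.domain, (x : V) ≤ -y → f x ≤ -c := fun x hx ↦ by
      have := hcU (-x) (by simpa using le_neg.1 hx)
      rwa [map_neg, le_neg] at this
    simpa using nonneg_add_smul_of_forall_le hcU' ⟨x, hx⟩ (neg_pos.2 ht) (by simpa using hz₀)
  · simpa using hf ⟨x, hx⟩ (by simpa using hz₀)
  · exact nonneg_add_smul_of_forall_le hcL ⟨x, hx⟩ ht hz₀

end Real

section DedekindComplete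

variable {V W : Type*}
  [AddCommGroup V] [PartialOrder V] [IsOrderedAddMonoid V] [Module ℝ V] [PosSMulMono ℝ V]
  [AddCommGroup W] [ConditionallyCompleteLattice W] [IsOrderedAddMonoid W] [Module ℝ W]
  [PosSMulMono ℝ W]

theorem exists_lt_nonneg_of_majorizing {f : V →ₗ.[ℝ] W}
    (hf : ∀ x : f.domain, 0 ≤ (x : V) → 0 ≤ f x) (hmaj : f.domain.IsMajorizing)
    (hdom : f.domain ≠ ⊤) : ∃ g, f < g ∧ ∀ x : g.domain, 0 ≤ (x : V) → 0 ≤ g x := by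
  obtain ⟨y, -, hy⟩ := SetLike.exists_of_lt (lt_top_iff_ne_top.2 hdom)
  obtain ⟨c, hcL, hcU⟩ := exists_between_of_majorizing hf hmaj y
  exact ⟨f.supSpanSingleton y c hy, f.lt_supSpanSingleton c hy,
    supSpanSingleton_nonneg hf hy hcL hcU⟩

theorem exists_nonneg_extension_of_majorizing {f : V →ₗ.[ℝ] W}
    (hf : ∀ x : f.domain, 0 ≤ (x : V) → 0 ≤ f x) (hmaj : f.domain.IsMajorizing) :
    ∃ g : V →ₗ[ℝ] W, (∀ x : f.domain, g x = f x) ∧ ∀ x, 0 ≤ x → 0 ≤ g x := by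
  let S := {g : V →ₗ.[ℝ] W | ∀ x : g.domain, 0 ≤ (x : V) → 0 ≤ g x}
  obtain ⟨q, hfq, hqS, hq⟩ := zorn_le_nonempty₀ S (fun c hcS hchain g hg ↦
    ⟨LinearPMap.sSup c hchain.directedOn,
      sSup_nonneg ⟨g, hg⟩ hchain.directedOn fun g hg ↦ hcS hg,
      fun _ ↦ LinearPMap.le_sSup hchain.directedOn⟩) f hf
  have hqtop : q.domain = ⊤ := by
    contrapose! hq
    obtain ⟨r, hqr, hr⟩ := exists_lt_nonneg_of_majorizing hqS (hmaj.mono hfq.1) hq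
    exact ⟨r, hr, hqr.le, hqr.not_ge⟩
  obtain ⟨_, q⟩ := q
  obtain ⟨-, hfq⟩ := hfq
  subst hqtop
  exact ⟨q.comp (LinearMap.id.codRestrict ⊤ fun _ ↦ trivial), fun x ↦ (hfq rfl).symm,
    fun x ↦ hqS ⟨x, trivial⟩⟩

end DedekindComplete

end LinearPMap

theorem stmt9_general
    {G : Type*} [Lattice G] [AddCommGroup G] [Module ℝ G]
    [CovariantClass G G (· + ·) (· ≤ ·)] [PosSMulMono ℝ G]
    (E : Set G)
    (hE0 : (0 : G) ∈ E)
    (hEadd : ∀ x ∈ E, ∀ y ∈ E, x + y ∈ E)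
    (hEsmul : ∀ (c : ℝ), ∀ x ∈ E, c • x ∈ E)
    (hmaj : ∀ x : G, ∃ y ∈ E, x ≤ y)
    {F : Type*} [ConditionallyCompleteLattice F] [AddCommGroup F] [Module ℝ F]
    [CovariantClass F F (· + ·) (· ≤ ·)] [PosSMulMono ℝ F]
    (T : G → F)
    (hT_add : ∀ x ∈ E, ∀ y ∈ E, T (x + y) = T x + T y)
    (hT_smul : ∀ (c : ℝ), ∀ x ∈ E, T (c • x) = c • T x)
    (hT_pos : ∀ x ∈ E, 0 ≤ x → 0 ≤ T x)
    :
    ∃ S : G →ₗ[ℝ] F, (∀ x : G, 0 ≤ x → 0 ≤ S x) ∧ ∀ y ∈ E, S y = T y := by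
  have : IsOrderedAddMonoid G := { add_le_add_left := fun _ _ h c ↦ add_le_add_left h c }
  have : IsOrderedAddMonoid F := { add_le_add_left := fun _ _ h c ↦ add_le_add_left h c }
  let Esub : Submodule ℝ G :=
    { carrier := E
      add_mem' := fun hx hy ↦ hEadd _ hx _ hy
      zero_mem' := hE0
      smul_mem' := hEsmul }
  let f : G →ₗ.[ℝ] F :=
    ⟨Esub,
      { toFun := fun x ↦ T x
        map_add' := fun x y ↦ hT_add x x.2 y y.2
        map_smul' := fun c x ↦ hT_smul c x x.2 }⟩
  obtain ⟨S, hSf, hS⟩ :=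
    LinearPMap.exists_nonneg_extension_of_majorizing (f := f) (fun x ↦ hT_pos x x.2) hmaj
  exact ⟨S, hS, fun y hy ↦ hSf ⟨y, hy⟩⟩

theorem stmt9
    {G : Type*} [Lattice G] [AddCommGroup G] [Module ℝ G]
    [CovariantClass G G (· + ·) (· ≤ ·)] [PosSMulMono ℝ G]
    (arch : ∀ x y : G, (∀ n : ℕ, n • x ≤ y) → x ≤ 0)
    (E : Set G)
    (hE0 : (0 : G) ∈ E)
    (hEadd : ∀ x ∈ E, ∀ y ∈ E, x + y ∈ E)
    (hEsmul : ∀ (c : ℝ), ∀ x ∈ E, c • x ∈ E)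
    (hEsup : ∀ x ∈ E, ∀ y ∈ E, x ⊔ y ∈ E)
    (hEinf : ∀ x ∈ E, ∀ y ∈ E, x ⊓ y ∈ E)
    (hdense : ∀ x : G, 0 < x → ∃ y ∈ E, 0 < y ∧ y ≤ x)
    (hmaj : ∀ x : G, ∃ y ∈ E, x ≤ y)
    {F : Type*} [ConditionallyCompleteLattice F] [AddCommGroup F] [Module ℝ F]
    [CovariantClass F F (· + ·) (· ≤ ·)] [PosSMulMono ℝ F]
    (T : G → F)
    (hT_add : ∀ x ∈ E, ∀ y ∈ E, T (x + y) = T x + T y)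
    (hT_smul : ∀ (c : ℝ), ∀ x ∈ E, T (c • x) = c • T x)
    (hT_pos : ∀ x ∈ E, 0 ≤ x → 0 ≤ T x)
    :
    ∃ S : G →ₗ[ℝ] F, (∀ x : G, 0 ≤ x → 0 ≤ S x) ∧ ∀ y ∈ E, S y = T y :=
  stmt9_general E hE0 hEadd hEsmul hmaj T hT_add hT_smul hT_pos
end

section
/- Let T : E → F be a positive linear operator that is norm bounded, and set M = sup{μ(T(y)) : y ∈ E, ν(y) ≤ 1}, assumed finite. Let S : E^t → F be any positive linear operator with S(y) = T(y) for all y ∈ E. Then sup{μ(S(x)) : x ∈ E^t, ρ(x) ≤ 1} = M. -/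
/-!
Since `ι = ρ` on `Eᵗ`, an `x ∈ Eᵗ` with `ρ x ≤ 1` is dominated, for every `t > 1`, by some
`y ∈ E` with `|x| ≤ y` and `ν y < t`. Positivity of `S` gives `|S x| ≤ S y = T y`, and
homogeneity gives `μ (T y) ≤ t * M`; letting `t → 1` bounds the new supremum by `M`. Conversely
`ρ ≤ ν` on `E`, so the unit ball of `ν` lies in the unit ball of `ρ`, and the supremum is at least `M`.
-/

open Filter Topology

theorem abs_map_le_of_abs_le {G F : Type*} [Lattice G] [AddCommGroup G] [AddLeftMono G]
    [Lattice F] [AddCommGroup F] [AddLeftMono F] {A : Set G} {S : G → F}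
    (hA_add : ∀ x ∈ A, ∀ y ∈ A, x + y ∈ A) (hA_neg : ∀ x ∈ A, -x ∈ A)
    (hS_add : ∀ x ∈ A, ∀ y ∈ A, S (x + y) = S x + S y) (hS_pos : ∀ x ∈ A, 0 ≤ x → 0 ≤ S x)
    {x y : G} (hx : x ∈ A) (hy : y ∈ A) (hxy : |x| ≤ y) : |S x| ≤ S y := by
  have hyx : y + -x ∈ A := hA_add y hy (-x) (hA_neg x hx)
  have h_le : S x ≤ S y := by
    have h_nonneg : 0 ≤ y + -x := by
      rw [← sub_eq_add_neg, sub_nonneg]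
      exact (le_abs_self x).trans hxy
    have h_split := hS_add _ hyx x hx
    rw [neg_add_cancel_right] at h_split
    exact h_split ▸ le_add_of_nonneg_left (hS_pos _ hyx h_nonneg)
  have h_neg_le : -S x ≤ S y := by
    have h := hS_pos _ (hA_add x hx y hy) (neg_le_iff_add_nonneg'.mp ((neg_le_abs x).trans hxy))
    rw [hS_add x hx y hy] at h
    exact neg_le_iff_add_nonneg'.mpr h
  exact abs_le'.mpr ⟨h_le, h_neg_le⟩

theorem csSup_image_le_of_abs_le {G : Type*} [Lattice G] [AddCommGroup G] [AddLeftMono G]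
    {E : Set G} {ν : G → ℝ} (hE0 : (0 : G) ∈ E) (hν_mono : ∀ x ∈ E, ∀ y ∈ E, |x| ≤ |y| → ν x ≤ ν y)
    {y : G} (hy : y ∈ E) : sSup (ν '' {z | z ∈ E ∧ 0 ≤ z ∧ z ≤ |y|}) ≤ ν y := by
  refine csSup_le ⟨ν 0, 0, ⟨hE0, le_rfl, abs_nonneg y⟩, rfl⟩ ?_
  rintro _ ⟨z, ⟨hz, hz0, hzy⟩, rfl⟩
  exact hν_mono z hz y hy (by rwa [abs_of_nonneg hz0])

theorem le_mul_of_mem_upperBounds_of_le {E F : Type*} [AddCommGroup E] [Module ℝ E]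
    [AddCommGroup F] [Module ℝ F] {D : Set E} {ν : E → ℝ} {μ : F → ℝ} {T : E → F} {M : ℝ}
    (hD_smul : ∀ (c : ℝ), ∀ x ∈ D, c • x ∈ D)
    (hν_smul : ∀ (c : ℝ), ∀ x ∈ D, ν (c • x) = |c| * ν x)
    (hμ_smul : ∀ (c : ℝ) (x : F), μ (c • x) = |c| * μ x)
    (hT_smul : ∀ (c : ℝ), ∀ x ∈ D, T (c • x) = c • T x)
    (hM : M ∈ upperBounds {r : ℝ | ∃ y ∈ D, ν y ≤ 1 ∧ r = μ (T y)})
    {t : ℝ} (ht : 0 < t) {y : E} (hy : y ∈ D) (hνy : ν y ≤ t) : μ (T y) ≤ t * M := by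
  have hν_scaled : ν (t⁻¹ • y) ≤ 1 := by
    rw [hν_smul _ y hy, abs_of_pos (inv_pos.mpr ht), inv_mul_le_iff₀ ht, mul_one]
    exact hνy
  have h := hM ⟨t⁻¹ • y, hD_smul _ y hy, hν_scaled, rfl⟩
  rwa [hT_smul _ y hy, hμ_smul, abs_of_pos (inv_pos.mpr ht), inv_mul_le_iff₀ ht] at h

theorem le_of_forall_one_lt_le_mul_right {a M : ℝ} (h : ∀ t > 1, a ≤ t * M) : a ≤ M := by
  have hlim : Tendsto (fun t : ℝ => t * M) (𝓝[>] 1) (𝓝 M) := by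
    simpa using ((continuous_mul_const M).tendsto 1).mono_left nhdsWithin_le_nhds
  exact ge_of_tendsto hlim (eventually_nhdsWithin_of_forall h)

theorem stmt11_general
    {G : Type*} [Lattice G] [AddCommGroup G] [Module ℝ G]
    [CovariantClass G G (· + ·) (· ≤ ·)]
    (E : Set G)
    (hE0 : (0 : G) ∈ E)
    (hEsmul : ∀ (c : ℝ), ∀ x ∈ E, c • x ∈ E)
    (hmaj : ∀ x : G, ∃ y ∈ E, x ≤ y)
    (ν : G → ℝ)
    (hν_smul : ∀ (c : ℝ), ∀ x ∈ E, ν (c • x) = |c| * ν x)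
    (hν_mono : ∀ x ∈ E, ∀ y ∈ E, |x| ≤ |y| → ν x ≤ ν y)
    (ρ : G → ℝ)
    (hρ : ∀ x : G, ρ x = sSup (ν '' {z | z ∈ E ∧ 0 ≤ z ∧ z ≤ |x|}))
    (ι : G → ℝ)
    (hι : ∀ x : G, ι x = sInf (ν '' {y | y ∈ E ∧ |x| ≤ y}))
    (Et : Set G)
    (hEEt : E ⊆ Et)
    (hEtadd : ∀ x ∈ Et, ∀ y ∈ Et, x + y ∈ Et)
    (hEtsmul : ∀ (c : ℝ), ∀ x ∈ Et, c • x ∈ Et)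
    (hEt : ∀ x ∈ Et, ι x = ρ x)
    {F : Type*} [ConditionallyCompleteLattice F] [AddCommGroup F] [Module ℝ F]
    [CovariantClass F F (· + ·) (· ≤ ·)]
    (μ : F → ℝ)
    (hμ_smul : ∀ (c : ℝ) (x : F), μ (c • x) = |c| * μ x)
    (hμ_mono : ∀ x y : F, |x| ≤ |y| → μ x ≤ μ y)
    (T : G → F)
    (hT_smul : ∀ (c : ℝ), ∀ x ∈ E, T (c • x) = c • T x)
    (M : ℝ)
    (hM : IsLUB {r : ℝ | ∃ y ∈ E, ν y ≤ 1 ∧ r = μ (T y)} M)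
    (S : G → F)
    (hS_add : ∀ x ∈ Et, ∀ y ∈ Et, S (x + y) = S x + S y)
    (hS_pos : ∀ x ∈ Et, 0 ≤ x → 0 ≤ S x)
    (hS_ext : ∀ y ∈ E, S y = T y) :
    IsLUB {r : ℝ | ∃ x ∈ Et, ρ x ≤ 1 ∧ r = μ (S x)} M := by
  constructor
  · rintro _ ⟨x, hx, hρx, rfl⟩
    refine le_of_forall_one_lt_le_mul_right fun t ht => ?_
    obtain ⟨_, ⟨y, ⟨hy, hxy⟩, rfl⟩, hνy⟩ : ∃ r ∈ ν '' {y | y ∈ E ∧ |x| ≤ y}, r < t := by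
      obtain ⟨y, hy, hxy⟩ := hmaj |x|
      refine exists_lt_of_csInf_lt ⟨ν y, y, ⟨hy, hxy⟩, rfl⟩ ?_
      rw [← hι, hEt x hx]
      linarith
    have hSx_le : |S x| ≤ |S y| :=
      (abs_map_le_of_abs_le hEtadd (fun z hz => by simpa using hEtsmul (-1) z hz) hS_add hS_pos
        hx (hEEt hy) hxy).trans (le_abs_self _)
    calc μ (S x) ≤ μ (T y) := hS_ext y hy ▸ hμ_mono _ _ hSx_le
      _ ≤ t * M := le_mul_of_mem_upperBounds_of_le hEsmul hν_smul hμ_smul hT_smul hM.1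
          (by linarith) hy hνy.le
  · refine fun b hb => hM.2 ?_
    rintro _ ⟨y, hy, hνy, rfl⟩
    refine hb ⟨y, hEEt hy, ?_, by rw [hS_ext y hy]⟩
    exact (hρ y ▸ csSup_image_le_of_abs_le hE0 hν_mono hy).trans hνy

theorem stmt11
    {G : Type*} [Lattice G] [AddCommGroup G] [Module ℝ G]
    [CovariantClass G G (· + ·) (· ≤ ·)] [PosSMulMono ℝ G]
    (arch : ∀ x y : G, (∀ n : ℕ, n • x ≤ y) → x ≤ 0)
    (E : Set G)
    (hE0 : (0 : G) ∈ E)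
    (hEadd : ∀ x ∈ E, ∀ y ∈ E, x + y ∈ E)
    (hEsmul : ∀ (c : ℝ), ∀ x ∈ E, c • x ∈ E)
    (hEsup : ∀ x ∈ E, ∀ y ∈ E, x ⊔ y ∈ E)
    (hEinf : ∀ x ∈ E, ∀ y ∈ E, x ⊓ y ∈ E)
    (hdense : ∀ x : G, 0 < x → ∃ y ∈ E, 0 < y ∧ y ≤ x)
    (hmaj : ∀ x : G, ∃ y ∈ E, x ≤ y)
    (ν : G → ℝ)
    (hν_zero : ∀ x ∈ E, (ν x = 0 ↔ x = 0))
    (hν_smul : ∀ (c : ℝ), ∀ x ∈ E, ν (c • x) = |c| * ν x)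
    (hν_add : ∀ x ∈ E, ∀ y ∈ E, ν (x + y) ≤ ν x + ν y)
    (hν_mono : ∀ x ∈ E, ∀ y ∈ E, |x| ≤ |y| → ν x ≤ ν y)
    (ρ : G → ℝ)
    (hρ : ∀ x : G, ρ x = sSup (ν '' {z | z ∈ E ∧ 0 ≤ z ∧ z ≤ |x|}))
    (ι : G → ℝ)
    (hι : ∀ x : G, ι x = sInf (ν '' {y | y ∈ E ∧ |x| ≤ y}))
    (Et : Set G)
    (hEEt : E ⊆ Et)
    (hEtadd : ∀ x ∈ Et, ∀ y ∈ Et, x + y ∈ Et)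
    (hEtsmul : ∀ (c : ℝ), ∀ x ∈ Et, c • x ∈ Et)
    (hEtsup : ∀ x ∈ Et, ∀ y ∈ Et, x ⊔ y ∈ Et)
    (hEtinf : ∀ x ∈ Et, ∀ y ∈ Et, x ⊓ y ∈ Et)
    (hEt : ∀ x ∈ Et, ι x = ρ x)
    {F : Type*} [ConditionallyCompleteLattice F] [AddCommGroup F] [Module ℝ F]
    [CovariantClass F F (· + ·) (· ≤ ·)] [PosSMulMono ℝ F]
    (μ : F → ℝ)
    (hμ_zero : ∀ x : F, (μ x = 0 ↔ x = 0))
    (hμ_smul : ∀ (c : ℝ) (x : F), μ (c • x) = |c| * μ x)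
    (hμ_add : ∀ x y : F, μ (x + y) ≤ μ x + μ y)
    (hμ_mono : ∀ x y : F, |x| ≤ |y| → μ x ≤ μ y)
    (T : G → F)
    (hT_add : ∀ x ∈ E, ∀ y ∈ E, T (x + y) = T x + T y)
    (hT_smul : ∀ (c : ℝ), ∀ x ∈ E, T (c • x) = c • T x)
    (hT_pos : ∀ x ∈ E, 0 ≤ x → 0 ≤ T x)
    (M : ℝ)
    (hM : IsLUB {r : ℝ | ∃ y ∈ E, ν y ≤ 1 ∧ r = μ (T y)} M)
    (S : G → F)
    (hS_add : ∀ x ∈ Et, ∀ y ∈ Et, S (x + y) = S x + S y)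
    (hS_smul : ∀ (c : ℝ), ∀ x ∈ Et, S (c • x) = c • S x)
    (hS_pos : ∀ x ∈ Et, 0 ≤ x → 0 ≤ S x)
    (hS_ext : ∀ y ∈ E, S y = T y) :
    IsLUB {r : ℝ | ∃ x ∈ Et, ρ x ≤ 1 ∧ r = μ (S x)} M :=
  stmt11_general E hE0 hEsmul hmaj ν hν_smul hν_mono ρ hρ ι hι Et hEEt hEtadd hEtsmul hEt μ hμ_smul
    hμ_mono T hT_smul M hM S hS_add hS_pos hS_ext
end

section
/- Suppose the norm ν on E is order continuous. Let S₁, S₂ : E^t → F be linear operators that are ρ-norm continuous (there exists C ≥ 0 with μ(Sᵢ(x)) ≤ C·ρ(x) for all x ∈ E^t, i = 1, 2) and satisfy S₁(y) = S₂(y) for all y ∈ E. Then S₁ = S₂. -/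
theorem stmt12
    {G : Type*} [Lattice G] [AddCommGroup G] [Module ℝ G]
    [CovariantClass G G (· + ·) (· ≤ ·)] [PosSMulMono ℝ G]
    (arch : ∀ x y : G, (∀ n : ℕ, n • x ≤ y) → x ≤ 0)
    (E : Set G)
    (hE0 : (0 : G) ∈ E)
    (hEadd : ∀ x ∈ E, ∀ y ∈ E, x + y ∈ E)
    (hEsmul : ∀ (c : ℝ), ∀ x ∈ E, c • x ∈ E)
    (hEsup : ∀ x ∈ E, ∀ y ∈ E, x ⊔ y ∈ E)
    (hEinf : ∀ x ∈ E, ∀ y ∈ E, x ⊓ y ∈ E)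
    (hdense : ∀ x : G, 0 < x → ∃ y ∈ E, 0 < y ∧ y ≤ x)
    (hmaj : ∀ x : G, ∃ y ∈ E, x ≤ y)
    (ν : G → ℝ)
    (hν_zero : ∀ x ∈ E, (ν x = 0 ↔ x = 0))
    (hν_smul : ∀ (c : ℝ), ∀ x ∈ E, ν (c • x) = |c| * ν x)
    (hν_add : ∀ x ∈ E, ∀ y ∈ E, ν (x + y) ≤ ν x + ν y)
    (hν_mono : ∀ x ∈ E, ∀ y ∈ E, |x| ≤ |y| → ν x ≤ ν y)
    (ρ : G → ℝ)
    (hρ : ∀ x : G, ρ x = sSup (ν '' {z | z ∈ E ∧ 0 ≤ z ∧ z ≤ |x|}))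
    (ι : G → ℝ)
    (hι : ∀ x : G, ι x = sInf (ν '' {y | y ∈ E ∧ |x| ≤ y}))
    (Et : Set G)
    (hEEt : E ⊆ Et)
    (hEtadd : ∀ x ∈ Et, ∀ y ∈ Et, x + y ∈ Et)
    (hEtsmul : ∀ (c : ℝ), ∀ x ∈ Et, c • x ∈ Et)
    (hEtsup : ∀ x ∈ Et, ∀ y ∈ Et, x ⊔ y ∈ Et)
    (hEtinf : ∀ x ∈ Et, ∀ y ∈ Et, x ⊓ y ∈ Et)
    (hEt : ∀ x ∈ Et, ι x = ρ x)
    (hoc : ∀ D : Set G, D.Nonempty → D ⊆ E → (∀ d ∈ D, 0 ≤ d) →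
      DirectedOn (· ≥ ·) D → IsGLB D 0 → sInf (ν '' D) = 0)
    {F : Type*} [Lattice F] [AddCommGroup F] [Module ℝ F]
    [CovariantClass F F (· + ·) (· ≤ ·)] [PosSMulMono ℝ F]
    (μ : F → ℝ)
    (hμ_zero : ∀ x : F, (μ x = 0 ↔ x = 0))
    (hμ_smul : ∀ (c : ℝ) (x : F), μ (c • x) = |c| * μ x)
    (hμ_add : ∀ x y : F, μ (x + y) ≤ μ x + μ y)
    (hμ_mono : ∀ x y : F, |x| ≤ |y| → μ x ≤ μ y)
    (S₁ S₂ : G → F)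
    (hS₁_add : ∀ x ∈ Et, ∀ y ∈ Et, S₁ (x + y) = S₁ x + S₁ y)
    (hS₁_smul : ∀ (c : ℝ), ∀ x ∈ Et, S₁ (c • x) = c • S₁ x)
    (hS₂_add : ∀ x ∈ Et, ∀ y ∈ Et, S₂ (x + y) = S₂ x + S₂ y)
    (hS₂_smul : ∀ (c : ℝ), ∀ x ∈ Et, S₂ (c • x) = c • S₂ x)
    (hS₁_cont : ∃ C : ℝ, 0 ≤ C ∧ ∀ x ∈ Et, μ (S₁ x) ≤ C * ρ x)
    (hS₂_cont : ∃ C : ℝ, 0 ≤ C ∧ ∀ x ∈ Et, μ (S₂ x) ≤ C * ρ x)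
    (hagree : ∀ y ∈ E, S₁ y = S₂ y) :
    ∀ x ∈ Et, S₁ x = S₂ x := by

  classical
  -- closure properties
  have hEneg : ∀ x ∈ E, -x ∈ E := fun x hx => by
    simpa using hEsmul (-1) x hx
  have hEsub : ∀ x ∈ E, ∀ y ∈ E, x - y ∈ E := fun x hx y hy => by
    simpa [sub_eq_add_neg] using hEadd x hx (-y) (hEneg y hy)
  have hEtneg : ∀ x ∈ Et, -x ∈ Et := fun x hx => by
    simpa using hEtsmul (-1) x hx
  have hEtsub : ∀ x ∈ Et, ∀ y ∈ Et, x - y ∈ Et := fun x hx y hy => by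
    simpa [sub_eq_add_neg] using hEtadd x hx (-y) (hEtneg y hy)
  have hν0 : ν 0 = 0 := (hν_zero 0 hE0).mpr rfl
  have hν_neg : ∀ x ∈ E, ν (-x) = ν x := fun x hx => by
    simpa using hν_smul (-1) x hx
  have hν_nonneg : ∀ x ∈ E, 0 ≤ ν x := by
    intro x hx
    have h := hν_add x hx (-x) (hEneg x hx)
    rw [add_neg_cancel, hν0, hν_neg x hx] at h
    linarith
  have hμ0 : μ 0 = 0 := by simpa using hμ_smul 0 0
  have hμ_neg : ∀ x : F, μ (-x) = μ x := fun x => by simpa using hμ_smul (-1) x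
  have hμ_nonneg : ∀ x : F, 0 ≤ μ x := by
    intro x
    have h := hμ_add x (-x)
    rw [add_neg_cancel, hμ0, hμ_neg x] at h
    linarith
  -- E-lower elements have supremum v
  have lem_sup : ∀ v b : G, 0 ≤ v → (∀ z ∈ E, 0 ≤ z → z ≤ v → z ≤ b) → v ≤ b := by
    intro v b hv hb
    by_contra hvb
    have h1 : v ⊓ b < v := lt_of_le_of_ne inf_le_left (fun he => hvb (he ▸ inf_le_right))
    have h2 : 0 < v - v ⊓ b := sub_pos.mpr h1
    obtain ⟨e, heE, hepos, hele⟩ := hdense _ h2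
    have key : ∀ n : ℕ, n • e ∈ E ∧ 0 ≤ n • e ∧ n • e ≤ v := by
      intro n
      induction n with
      | zero => simpa using ⟨hE0, hv⟩
      | succ n ih =>
        obtain ⟨hmem, hnn, hle⟩ := ih
        have hb' : n • e ≤ b := hb _ hmem hnn hle
        have h3 : n • e ≤ v ⊓ b := le_inf hle hb'
        have h4 : n • e + e ≤ v := by
          calc n • e + e ≤ v ⊓ b + (v - v ⊓ b) := add_le_add h3 hele
            _ = v := by abel
        exact ⟨by rw [succ_nsmul]; exact hEadd _ hmem _ heE,
          by rw [succ_nsmul]; exact add_nonneg hnn hepos.le,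
          by rw [succ_nsmul]; exact h4⟩
    have := arch e v fun n => (key n).2.2
    exact absurd this hepos.not_ge
  -- E-upper elements have infimum v
  have lem_inf : ∀ v u : G, (∀ w ∈ E, v ≤ w → u ≤ w) → u ≤ v := by
    intro v u hu
    by_contra huv
    have h1 : v < v ⊔ u := lt_of_le_of_ne le_sup_left (fun he => huv (he ▸ le_sup_right))
    have h2 : 0 < v ⊔ u - v := sub_pos.mpr h1
    obtain ⟨e, heE, hepos, hele⟩ := hdense _ h2
    obtain ⟨w₀, hw₀E, hw₀⟩ := hmaj v
    have key : ∀ n : ℕ, w₀ - n • e ∈ E ∧ v ≤ w₀ - n • e := by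
      intro n
      induction n with
      | zero => simpa using ⟨hw₀E, hw₀⟩
      | succ n ih =>
        obtain ⟨hmem, hle⟩ := ih
        have hub : u ≤ w₀ - n • e := hu _ hmem hle
        have h3 : v ⊔ u ≤ w₀ - n • e := sup_le hle hub
        have h4 : e ≤ (w₀ - n • e) - v := hele.trans (sub_le_sub_right h3 v)
        have h5 : v ≤ (w₀ - n • e) - e := le_sub_comm.mp h4
        have heq : w₀ - (n + 1) • e = (w₀ - n • e) - e := by
          rw [succ_nsmul]; abel
        exact ⟨by rw [heq]; exact hEsub _ hmem _ heE, by rw [heq]; exact h5⟩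
    have harch : ∀ n : ℕ, n • e ≤ w₀ - u := by
      intro n
      exact le_sub_comm.mp (hu _ (key n).1 (key n).2)
    have := arch e (w₀ - u) harch
    exact absurd this hepos.not_ge
  -- approximation via order continuity
  have approx : ∀ v : G, 0 ≤ v → ∀ ε : ℝ, 0 < ε →
      ∃ z ∈ E, ∃ w ∈ E, 0 ≤ z ∧ z ≤ v ∧ v ≤ w ∧ ν (w - z) < ε := by
    intro v hv ε hε
    set D : Set G := {d | ∃ z ∈ E, ∃ w ∈ E, 0 ≤ z ∧ z ≤ v ∧ v ≤ w ∧ d = w - z} with hD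
    obtain ⟨w₀, hw₀E, hw₀⟩ := hmaj v
    have hne : D.Nonempty := ⟨w₀ - 0, 0, hE0, w₀, hw₀E, le_refl _, hv, hw₀, rfl⟩
    have hsub : D ⊆ E := by
      rintro d ⟨z, hz, w, hw, -, -, -, rfl⟩
      exact hEsub _ hw _ hz
    have hpos : ∀ d ∈ D, 0 ≤ d := by
      rintro d ⟨z, hz, w, hw, -, hzv, hvw, rfl⟩
      exact sub_nonneg.mpr (hzv.trans hvw)
    have hdir : DirectedOn (· ≥ ·) D := by
      rintro d₁ ⟨z₁, hz₁, w₁, hw₁, hz₁0, hz₁v, hvw₁, rfl⟩ d₂ ⟨z₂, hz₂, w₂, hw₂, hz₂0, hz₂v, hvw₂, rfl⟩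
      exact ⟨w₁ ⊓ w₂ - z₁ ⊔ z₂,
        ⟨z₁ ⊔ z₂, hEsup _ hz₁ _ hz₂, w₁ ⊓ w₂, hEinf _ hw₁ _ hw₂,
          hz₁0.trans le_sup_left, sup_le hz₁v hz₂v, le_inf hvw₁ hvw₂, rfl⟩,
        sub_le_sub inf_le_left le_sup_left, sub_le_sub inf_le_right le_sup_right⟩
    have hglb : IsGLB D 0 := by
      constructor
      · intro d hd; exact hpos d hd
      · intro u hu
        have h1 : ∀ z ∈ E, 0 ≤ z → z ≤ v → z ≤ v - u := by
          intro z hz hz0 hzv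
          have h2 : ∀ w ∈ E, v ≤ w → u + z ≤ w := by
            intro w hw hvw
            have h3 : u ≤ w - z := hu ⟨z, hz, w, hw, hz0, hzv, hvw, rfl⟩
            exact (le_sub_iff_add_le.mp h3)
          have h4 : u + z ≤ v := lem_inf v (u + z) h2
          exact le_sub_iff_add_le.mpr (by rwa [add_comm] at h4)
        have h5 : v ≤ v - u := lem_sup v (v - u) hv h1
        have := sub_le_sub_right h5 v
        simpa using le_sub_comm.mp h5
    have h0 : sInf (ν '' D) = 0 := hoc D hne hsub hpos hdir hglb
    have hlt : sInf (ν '' D) < ε := by rw [h0]; exact hε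
    obtain ⟨a, ⟨d, hdD, rfl⟩, ha⟩ := exists_lt_of_csInf_lt (hne.image ν) hlt
    obtain ⟨z, hz, w, hw, hz0, hzv, hvw, rfl⟩ := hdD
    exact ⟨z, hz, w, hw, hz0, hzv, hvw, ha⟩
  -- main argument
  intro x hx
  obtain ⟨C₁, hC₁, hS₁c⟩ := hS₁_cont
  obtain ⟨C₂, hC₂, hS₂c⟩ := hS₂_cont
  set t := S₁ x - S₂ x with ht
  have key : ∀ ε : ℝ, 0 < ε → μ t ≤ (C₁ + C₂) * (2 * ε) := by
    intro ε hε
    obtain ⟨z₁, hz₁E, w₁, hw₁E, hz₁0, hz₁v, hvw₁, hν₁⟩ := approx (x⁺) (posPart_nonneg x) ε hε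
    obtain ⟨z₂, hz₂E, w₂, hw₂E, hz₂0, hz₂v, hvw₂, hν₂⟩ := approx (x⁻) (negPart_nonneg x) ε hε
    set y := z₁ - z₂ with hy
    have hyE : y ∈ E := hEsub _ hz₁E _ hz₂E
    have hyEt : y ∈ Et := hEEt hyE
    have hxy : x - y ∈ Et := hEtsub x hx y hyEt
    set W := (w₁ - z₁) + (w₂ - z₂) with hW
    have hWE : W ∈ E := hEadd _ (hEsub _ hw₁E _ hz₁E) _ (hEsub _ hw₂E _ hz₂E)
    have hW10 : (0 : G) ≤ w₁ - z₁ := sub_nonneg.mpr (hz₁v.trans hvw₁)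
    have hW20 : (0 : G) ≤ w₂ - z₂ := sub_nonneg.mpr (hz₂v.trans hvw₂)
    have hW0 : (0 : G) ≤ W := add_nonneg hW10 hW20
    have habs : |x - y| ≤ W := by
      have hxid : x - y = (x⁺ - z₁) - (x⁻ - z₂) := by
        have h1 : (x⁺ - z₁) - (x⁻ - z₂) = (x⁺ - x⁻) - (z₁ - z₂) := by abel
        rw [hy, h1, posPart_sub_negPart]
      rw [hxid]
      refine abs_le'.mpr ⟨?_, ?_⟩
      · have h1 : x⁺ - z₁ - (x⁻ - z₂) ≤ x⁺ - z₁ := by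
          have := sub_nonneg.mpr hz₂v
          exact sub_le_self _ this
        have h2 : x⁺ - z₁ ≤ w₁ - z₁ := sub_le_sub_right hvw₁ z₁
        calc x⁺ - z₁ - (x⁻ - z₂) ≤ w₁ - z₁ := h1.trans h2
          _ ≤ W := le_add_of_nonneg_right hW20
      · have h1 : -(x⁺ - z₁ - (x⁻ - z₂)) = x⁻ - z₂ - (x⁺ - z₁) := by abel
        rw [h1]
        have h2 : x⁻ - z₂ - (x⁺ - z₁) ≤ x⁻ - z₂ := by
          have := sub_nonneg.mpr hz₁v
          exact sub_le_self _ this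
        have h3 : x⁻ - z₂ ≤ w₂ - z₂ := sub_le_sub_right hvw₂ z₂
        calc x⁻ - z₂ - (x⁺ - z₁) ≤ w₂ - z₂ := h2.trans h3
          _ ≤ W := le_add_of_nonneg_left hW10
    have hνW : ν W ≤ ν (w₁ - z₁) + ν (w₂ - z₂) :=
      hν_add _ (hEsub _ hw₁E _ hz₁E) _ (hEsub _ hw₂E _ hz₂E)
    have hρbound : ρ (x - y) ≤ ν (w₁ - z₁) + ν (w₂ - z₂) := by
      rw [hρ]
      apply Real.sSup_le
      · rintro a ⟨e, ⟨heE, he0, hele⟩, rfl⟩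
        have heW : |e| ≤ |W| := by
          rw [abs_of_nonneg he0, abs_of_nonneg hW0]
          exact hele.trans habs
        exact (hν_mono e heE W hWE heW).trans hνW
      · exact add_nonneg (hν_nonneg _ (hEsub _ hw₁E _ hz₁E)) (hν_nonneg _ (hEsub _ hw₂E _ hz₂E))
    have hS : S₁ x - S₂ x = S₁ (x - y) - S₂ (x - y) := by
      have e1 : S₁ x = S₁ (x - y) + S₁ y := by
        conv_lhs => rw [show x = (x - y) + y by abel]
        exact hS₁_add _ hxy _ hyEt
      have e2 : S₂ x = S₂ (x - y) + S₂ y := by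
        conv_lhs => rw [show x = (x - y) + y by abel]
        exact hS₂_add _ hxy _ hyEt
      rw [e1, e2, hagree y hyE]; abel
    have hμt : μ t ≤ C₁ * ρ (x - y) + C₂ * ρ (x - y) := by
      rw [ht, hS]
      calc μ (S₁ (x - y) - S₂ (x - y)) ≤ μ (S₁ (x - y)) + μ (-(S₂ (x - y))) := by
            rw [sub_eq_add_neg]; exact hμ_add _ _
        _ = μ (S₁ (x - y)) + μ (S₂ (x - y)) := by rw [hμ_neg]
        _ ≤ C₁ * ρ (x - y) + C₂ * ρ (x - y) := add_le_add (hS₁c _ hxy) (hS₂c _ hxy)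
    have hρ2 : ρ (x - y) ≤ 2 * ε := hρbound.trans (by linarith)
    have hρnn : 0 ≤ ρ (x - y) := by
      rw [hρ]
      apply Real.sSup_nonneg
      rintro a ⟨e, ⟨heE, he0, -⟩, rfl⟩
      exact hν_nonneg e heE
    nlinarith
  have hle : μ t ≤ 0 := by
    refine le_of_forall_pos_le_add ?_
    intro ε' hε'
    have hδ : (0:ℝ) < ε' / (2 * (C₁ + C₂) + 2) := by positivity
    have := key _ hδ
    rw [zero_add]
    have hpos : (0:ℝ) < 2 * (C₁ + C₂) + 2 := by linarith
    have hq : ε' / (2 * (C₁ + C₂) + 2) * (2 * (C₁ + C₂) + 2) = ε' :=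
      div_mul_cancel₀ ε' hpos.ne'
    nlinarith [this, hδ, hq, mul_nonneg (by linarith : (0:ℝ) ≤ C₁ + C₂) hδ.le]
  have heq0 : μ t = 0 := le_antisymm hle (hμ_nonneg t)
  have := (hμ_zero t).mp heq0
  exact sub_eq_zero.mp this
end

section
/- Let T : E → F be a positive, order continuous linear operator. Then for every x ∈ G with x ≥ 0, the infimum in F of {T(y) : y ∈ E, x ≤ y} exists, the supremum in F of {T(z) : z ∈ E, 0 ≤ z ≤ x} exists, and the two are equal. -/
theorem stmt13
    {G : Type*} [Lattice G] [AddCommGroup G] [Module ℝ G]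
    [CovariantClass G G (· + ·) (· ≤ ·)] [PosSMulMono ℝ G]
    (arch : ∀ x y : G, (∀ n : ℕ, n • x ≤ y) → x ≤ 0)
    (E : Set G)
    (hE0 : (0 : G) ∈ E)
    (hEadd : ∀ x ∈ E, ∀ y ∈ E, x + y ∈ E)
    (hEsmul : ∀ (c : ℝ), ∀ x ∈ E, c • x ∈ E)
    (hEsup : ∀ x ∈ E, ∀ y ∈ E, x ⊔ y ∈ E)
    (hEinf : ∀ x ∈ E, ∀ y ∈ E, x ⊓ y ∈ E)
    (hdense : ∀ x : G, 0 < x → ∃ y ∈ E, 0 < y ∧ y ≤ x)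
    (hmaj : ∀ x : G, ∃ y ∈ E, x ≤ y)
    {F : Type*} [ConditionallyCompleteLattice F] [AddCommGroup F] [Module ℝ F]
    [CovariantClass F F (· + ·) (· ≤ ·)] [PosSMulMono ℝ F]
    (T : G → F)
    (hT_add : ∀ x ∈ E, ∀ y ∈ E, T (x + y) = T x + T y)
    (hT_smul : ∀ (c : ℝ), ∀ x ∈ E, T (c • x) = c • T x)
    (hT_pos : ∀ x ∈ E, 0 ≤ x → 0 ≤ T x)
    (hT_oc : ∀ D : Set G, D.Nonempty → D ⊆ E → DirectedOn (· ≥ ·) D →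
      IsGLB D 0 → IsGLB (T '' D) 0)
    :
    ∀ x : G, 0 ≤ x → ∃ v : F,
      IsGLB (T '' {y | y ∈ E ∧ x ≤ y}) v ∧
      IsLUB (T '' {z | z ∈ E ∧ 0 ≤ z ∧ z ≤ x}) v := by
  intro x hx
  set U : Set G := {y | y ∈ E ∧ x ≤ y} with hUdef
  set L : Set G := {z | z ∈ E ∧ 0 ≤ z ∧ z ≤ x} with hLdef
  have hEneg : ∀ a ∈ E, -a ∈ E := by
    intro a ha
    have := hEsmul (-1) a ha
    rwa [neg_one_smul] at this
  have hEsub : ∀ a ∈ E, ∀ b ∈ E, a - b ∈ E := by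
    intro a ha b hb
    have := hEadd a ha (-b) (hEneg b hb)
    rwa [← sub_eq_add_neg] at this
  have hT_sub : ∀ a ∈ E, ∀ b ∈ E, T (a - b) = T a - T b := by
    intro a ha b hb
    have h1 : T (a - b + b) = T (a - b) + T b := hT_add _ (hEsub a ha b hb) b hb
    rw [sub_add_cancel] at h1
    exact eq_sub_of_add_eq h1.symm
  have hT_mono : ∀ a ∈ E, ∀ b ∈ E, a ≤ b → T a ≤ T b := by
    intro a ha b hb hab
    have h1 : 0 ≤ T (b - a) := hT_pos _ (hEsub b hb a ha) (sub_nonneg.2 hab)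
    rw [hT_sub b hb a ha] at h1
    exact sub_nonneg.1 h1
  obtain ⟨y0, hy0E, hxy0⟩ := hmaj x
  have hy0U : y0 ∈ U := ⟨hy0E, hxy0⟩
  have h0L : (0 : G) ∈ L := ⟨hE0, le_rfl, hx⟩
  -- x is the supremum of L
  have hLub : IsLUB L x := by
    constructor
    · intro z hz; exact hz.2.2
    · intro u hu
      have key : x ≤ x ⊓ u := by
        by_contra hc
        have hlt : x ⊓ u < x := lt_of_le_of_ne inf_le_left (fun h => hc h.ge)
        have hd : 0 < x - x ⊓ u := sub_pos.2 hlt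
        obtain ⟨e, heE, hepos, hed⟩ := hdense _ hd
        have keyn : ∀ n : ℕ, (n • e : G) ∈ L := by
          intro n
          induction n with
          | zero => rw [zero_nsmul]; exact h0L
          | succ n ih =>
            have h1 : (n • e : G) ≤ x ⊓ u := le_inf ih.2.2 (hu ih)
            have hsum : (n • e : G) + e ≤ x := by
              have h2 : (n • e : G) + e ≤ x ⊓ u + (x - x ⊓ u) := add_le_add h1 hed
              have h3 : x ⊓ u + (x - x ⊓ u) = x := by abel
              rwa [h3] at h2
            rw [succ_nsmul]
            exact ⟨hEadd _ ih.1 e heE, add_nonneg ih.2.1 hepos.le, hsum⟩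
        have := arch e x (fun n => (keyn n).2.2)
        exact hepos.not_ge this
      exact key.trans inf_le_right
  -- x is the infimum of U
  have hGlb : IsGLB U x := by
    constructor
    · intro y hy; exact hy.2
    · intro w hw
      have key : w ⊔ x ≤ x := by
        by_contra hc
        have hlt : x < w ⊔ x := lt_of_le_of_ne le_sup_right (fun h => hc h.ge)
        have hd : 0 < w ⊔ x - x := sub_pos.2 hlt
        obtain ⟨e, heE, hepos, hed⟩ := hdense _ hd
        have hw' : ∀ y ∈ U, w ⊔ x ≤ y := fun y hy => sup_le (hw hy) hy.2
        have keyn : ∀ n : ℕ, (y0 - n • e : G) ∈ U := by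
          intro n
          induction n with
          | zero => rw [zero_nsmul, sub_zero]; exact hy0U
          | succ n ih =>
            have h1 : w ⊔ x ≤ y0 - n • e := hw' _ ih
            have h2 : w ⊔ x - (w ⊔ x - x) ≤ (y0 - n • e) - e := sub_le_sub h1 hed
            rw [sub_sub_cancel] at h2
            have h3 : (y0 - (n + 1) • e : G) = (y0 - n • e) - e := by
              rw [succ_nsmul]; abel
            rw [h3]
            exact ⟨hEsub _ ih.1 e heE, h2⟩
        have hb : ∀ n : ℕ, n • e ≤ y0 - x := fun n => le_sub_comm.mp (keyn n).2
        have := arch e (y0 - x) hb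
        exact hepos.not_ge this
      exact le_sup_left.trans key
  -- difference set
  set D : Set G := {d | ∃ y ∈ U, ∃ z ∈ L, d = y - z} with hDdef
  have hDne : D.Nonempty := ⟨y0 - 0, y0, hy0U, 0, h0L, rfl⟩
  have hDE : D ⊆ E := by
    rintro d ⟨y, hy, z, hz, rfl⟩
    exact hEsub y hy.1 z hz.1
  have hDdir : DirectedOn (· ≥ ·) D := by
    rintro d1 ⟨y1, hy1, z1, hz1, rfl⟩ d2 ⟨y2, hy2, z2, hz2, rfl⟩
    refine ⟨(y1 ⊓ y2) - (z1 ⊔ z2),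
      ⟨y1 ⊓ y2, ⟨hEinf _ hy1.1 _ hy2.1, le_inf hy1.2 hy2.2⟩,
       z1 ⊔ z2, ⟨hEsup _ hz1.1 _ hz2.1, hz1.2.1.trans le_sup_left,
         sup_le hz1.2.2 hz2.2.2⟩, rfl⟩, ?_, ?_⟩
    · exact sub_le_sub inf_le_left le_sup_left
    · exact sub_le_sub inf_le_right le_sup_right
  have hDglb : IsGLB D 0 := by
    constructor
    · rintro d ⟨y, hy, z, hz, rfl⟩
      exact sub_nonneg.2 (hz.2.2.trans hy.2)
    · intro w hw
      have h1 : ∀ y ∈ U, w + x ≤ y := by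
        intro y hy
        have h2 : ∀ z ∈ L, z ≤ y - w := fun z hz =>
          le_sub_comm.mp (hw ⟨y, hy, z, hz, rfl⟩)
        have h3 : x ≤ y - w := hLub.2 h2
        have h4 : w ≤ y - x := le_sub_comm.mp h3
        exact add_le_of_le_sub_right h4
      have h5 : w + x ≤ x := hGlb.2 h1
      exact (add_le_iff_nonpos_left).mp h5
  have hTDglb : IsGLB (T '' D) 0 := hT_oc D hDne hDE hDdir hDglb
  -- conclude in F
  have hLne : (T '' L).Nonempty := ⟨T 0, 0, h0L, rfl⟩
  have hbdd : BddAbove (T '' L) := by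
    refine ⟨T y0, ?_⟩
    rintro w ⟨z, hz, rfl⟩
    exact hT_mono z hz.1 y0 hy0E (hz.2.2.trans hxy0)
  refine ⟨sSup (T '' L), ?_, isLUB_csSup hLne hbdd⟩
  constructor
  · rintro b ⟨y, hy, rfl⟩
    refine csSup_le hLne ?_
    rintro w ⟨z, hz, rfl⟩
    exact hT_mono z hz.1 y hy.1 (hz.2.2.trans hy.2)
  · intro b hb
    have hlb : b - sSup (T '' L) ∈ lowerBounds (T '' D) := by
      rintro w ⟨d, ⟨y, hy, z, hz, rfl⟩, rfl⟩
      rw [hT_sub y hy.1 z hz.1]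
      exact sub_le_sub (hb ⟨y, hy, rfl⟩) (le_csSup hbdd ⟨z, hz, rfl⟩)
    have := hTDglb.2 hlb
    exact sub_nonpos.mp this
end

section
/- Let T : E → F be a positive, order continuous linear operator such that T(u ∧ v) = T(u) ∧ T(v) for all u, v ∈ E with u, v ≥ 0. For x ∈ G with x ≥ 0 set T^t(x) = sup{T(z) : z ∈ E, 0 ≤ z ≤ x} (this supremum exists in F). Then T^t(x ∧ y) = T^t(x) ∧ T^t(y) for all x, y ∈ G with x, y ≥ 0. -/
/-!
Since `T` preserves `⊓` on positive elements of `E`, it is monotone there, so each set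
`{T z | z ∈ E, 0 ≤ z ≤ x}` is bounded above by `T y` for any majorant `y ∈ E` of `x` and has a
supremum. If `u ≤ x` and `v ≤ y` then `u ⊓ v ≤ x ⊓ y` and `T u ⊓ T v = T (u ⊓ v)`, so the
identity reduces to the infinite distributive law `(⨆ a) ⊓ c = ⨆ (a ⊓ c)`, which holds in every
lattice-ordered group because `a ⊓ c = a + c - a ⊔ c`.
-/

theorem IsLUB.inf_le_of_forall_inf_le {α : Type*} [Lattice α] [AddCommGroup α]
    [CovariantClass α α (· + ·) (· ≤ ·)] {S : Set α} {s c b : α} (hs : IsLUB S s)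
    (hb : ∀ a ∈ S, a ⊓ c ≤ b) : s ⊓ c ≤ b := by
  have hs_le : s ≤ b + s ⊔ c - c := hs.2 fun a ha => le_sub_iff_add_le.2 <|
    calc a + c = a ⊓ c + a ⊔ c := (inf_add_sup a c).symm
      _ ≤ b + s ⊔ c := add_le_add (hb a ha) (sup_le_sup_right (hs.1 ha) c)
  calc s ⊓ c = s + c - s ⊔ c := eq_sub_of_add_eq (inf_add_sup s c)
    _ ≤ b := sub_le_iff_le_add.2 (le_sub_iff_add_le.1 hs_le)

section InfPreserving

variable {G F : Type*} [Lattice G] [Zero G] {E : Set G}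

theorem map_le_map_of_map_inf [SemilatticeInf F] {T : G → F}
    (hT : ∀ u ∈ E, ∀ v ∈ E, 0 ≤ u → 0 ≤ v → T (u ⊓ v) = T u ⊓ T v)
    {u v : G} (hu : u ∈ E) (hv : v ∈ E) (hu0 : 0 ≤ u) (huv : u ≤ v) : T u ≤ T v :=
  calc T u = T (u ⊓ v) := by rw [inf_eq_left.2 huv]
    _ = T u ⊓ T v := hT u hu v hv hu0 (hu0.trans huv)
    _ ≤ T v := inf_le_right

theorem isLUB_csSup_image_of_map_inf [ConditionallyCompleteLattice F] {T : G → F}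
    (hE0 : (0 : G) ∈ E) (hmaj : ∀ x : G, ∃ y ∈ E, x ≤ y)
    (hT : ∀ u ∈ E, ∀ v ∈ E, 0 ≤ u → 0 ≤ v → T (u ⊓ v) = T u ⊓ T v) {x : G} (hx : 0 ≤ x) :
    IsLUB (T '' {z | z ∈ E ∧ 0 ≤ z ∧ z ≤ x}) (sSup (T '' {z | z ∈ E ∧ 0 ≤ z ∧ z ≤ x})) := by
  obtain ⟨y, hyE, hxy⟩ := hmaj x
  refine isLUB_csSup ⟨T 0, 0, ⟨hE0, le_rfl, hx⟩, rfl⟩ ⟨T y, ?_⟩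
  rintro _ ⟨z, ⟨hzE, hz0, hzx⟩, rfl⟩
  exact map_le_map_of_map_inf hT hzE hyE hz0 (hzx.trans hxy)

theorem csSup_image_inf_of_map_inf [ConditionallyCompleteLattice F] [AddCommGroup F]
    [CovariantClass F F (· + ·) (· ≤ ·)] {T : G → F}
    (hE0 : (0 : G) ∈ E) (hEinf : ∀ x ∈ E, ∀ y ∈ E, x ⊓ y ∈ E)
    (hmaj : ∀ x : G, ∃ y ∈ E, x ≤ y)
    (hT : ∀ u ∈ E, ∀ v ∈ E, 0 ≤ u → 0 ≤ v → T (u ⊓ v) = T u ⊓ T v)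
    {x y : G} (hx : 0 ≤ x) (hy : 0 ≤ y) :
    sSup (T '' {z | z ∈ E ∧ 0 ≤ z ∧ z ≤ x ⊓ y}) =
      sSup (T '' {z | z ∈ E ∧ 0 ≤ z ∧ z ≤ x}) ⊓ sSup (T '' {z | z ∈ E ∧ 0 ≤ z ∧ z ≤ y}) := by
  have hxy := isLUB_csSup_image_of_map_inf hE0 hmaj hT (le_inf hx hy)
  have hx' := isLUB_csSup_image_of_map_inf hE0 hmaj hT hx
  have hy' := isLUB_csSup_image_of_map_inf hE0 hmaj hT hy
  refine le_antisymm (le_inf (hxy.2 ?_) (hxy.2 ?_)) ?_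
  · rintro _ ⟨z, ⟨hzE, hz0, hz⟩, rfl⟩
    exact hx'.1 ⟨z, ⟨hzE, hz0, hz.trans inf_le_left⟩, rfl⟩
  · rintro _ ⟨z, ⟨hzE, hz0, hz⟩, rfl⟩
    exact hy'.1 ⟨z, ⟨hzE, hz0, hz.trans inf_le_right⟩, rfl⟩
  refine hx'.inf_le_of_forall_inf_le ?_
  rintro _ ⟨u, ⟨huE, hu0, hux⟩, rfl⟩
  rw [inf_comm]
  refine hy'.inf_le_of_forall_inf_le ?_
  rintro _ ⟨v, ⟨hvE, hv0, hvy⟩, rfl⟩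
  rw [inf_comm, ← hT u huE v hvE hu0 hv0]
  exact hxy.1 ⟨u ⊓ v, ⟨hEinf u huE v hvE, le_inf hu0 hv0, inf_le_inf hux hvy⟩, rfl⟩

end InfPreserving

theorem stmt15_general
    {G : Type*} [Lattice G] [AddCommGroup G]
    (E : Set G)
    (hE0 : (0 : G) ∈ E)
    (hEinf : ∀ x ∈ E, ∀ y ∈ E, x ⊓ y ∈ E)
    (hmaj : ∀ x : G, ∃ y ∈ E, x ≤ y)
    {F : Type*} [ConditionallyCompleteLattice F] [AddCommGroup F]
    [CovariantClass F F (· + ·) (· ≤ ·)]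
    (T : G → F)
    (hT_latt : ∀ u ∈ E, ∀ v ∈ E, 0 ≤ u → 0 ≤ v → T (u ⊓ v) = T u ⊓ T v) :
    (∀ x : G, 0 ≤ x → ∃ v : F, IsLUB (T '' {z | z ∈ E ∧ 0 ≤ z ∧ z ≤ x}) v) ∧
    (∀ x y : G, 0 ≤ x → 0 ≤ y →
      sSup (T '' {z | z ∈ E ∧ 0 ≤ z ∧ z ≤ x ⊓ y}) =
        sSup (T '' {z | z ∈ E ∧ 0 ≤ z ∧ z ≤ x}) ⊓
        sSup (T '' {z | z ∈ E ∧ 0 ≤ z ∧ z ≤ y})) :=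
  ⟨fun _ hx => ⟨_, isLUB_csSup_image_of_map_inf hE0 hmaj hT_latt hx⟩,
    fun _ _ hx hy => csSup_image_inf_of_map_inf hE0 hEinf hmaj hT_latt hx hy⟩

theorem stmt15
    {G : Type*} [Lattice G] [AddCommGroup G] [Module ℝ G]
    [CovariantClass G G (· + ·) (· ≤ ·)] [PosSMulMono ℝ G]
    (arch : ∀ x y : G, (∀ n : ℕ, n • x ≤ y) → x ≤ 0)
    (E : Set G)
    (hE0 : (0 : G) ∈ E)
    (hEadd : ∀ x ∈ E, ∀ y ∈ E, x + y ∈ E)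
    (hEsmul : ∀ (c : ℝ), ∀ x ∈ E, c • x ∈ E)
    (hEsup : ∀ x ∈ E, ∀ y ∈ E, x ⊔ y ∈ E)
    (hEinf : ∀ x ∈ E, ∀ y ∈ E, x ⊓ y ∈ E)
    (hdense : ∀ x : G, 0 < x → ∃ y ∈ E, 0 < y ∧ y ≤ x)
    (hmaj : ∀ x : G, ∃ y ∈ E, x ≤ y)
    {F : Type*} [ConditionallyCompleteLattice F] [AddCommGroup F] [Module ℝ F]
    [CovariantClass F F (· + ·) (· ≤ ·)] [PosSMulMono ℝ F]
    (T : G → F)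
    (hT_add : ∀ x ∈ E, ∀ y ∈ E, T (x + y) = T x + T y)
    (hT_smul : ∀ (c : ℝ), ∀ x ∈ E, T (c • x) = c • T x)
    (hT_pos : ∀ x ∈ E, 0 ≤ x → 0 ≤ T x)
    (hT_oc : ∀ D : Set G, D.Nonempty → D ⊆ E → DirectedOn (· ≥ ·) D →
      IsGLB D 0 → IsGLB (T '' D) 0)
    (hT_latt : ∀ u ∈ E, ∀ v ∈ E, 0 ≤ u → 0 ≤ v → T (u ⊓ v) = T u ⊓ T v) :
    (∀ x : G, 0 ≤ x → ∃ v : F, IsLUB (T '' {z | z ∈ E ∧ 0 ≤ z ∧ z ≤ x}) v) ∧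
    (∀ x y : G, 0 ≤ x → 0 ≤ y →
      sSup (T '' {z | z ∈ E ∧ 0 ≤ z ∧ z ≤ x ⊓ y}) =
        sSup (T '' {z | z ∈ E ∧ 0 ≤ z ∧ z ≤ x}) ⊓
        sSup (T '' {z | z ∈ E ∧ 0 ≤ z ∧ z ≤ y})) :=
  stmt15_general E hE0 hEinf hmaj T hT_latt
end

section
/- Let T : E → F be a positive, order continuous linear operator and let S : G → F be a positive linear operator with S(y) = T(y) for all y ∈ E. Then S is order continuous: for every nonempty downward-directed set D of positive elements of G with infimum 0 in G, the set S(D) has infimum 0 in F. -/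
/-!
Replace `D` by `C = {y ∈ E | d ≤ y for some d ∈ D}`, a downward-directed subset of `E`. Since `E`
is order dense and majorizing in the Archimedean space `G`, every `x ∈ G` is the infimum of the
elements of `E` above it, so `C` still has infimum `0`. Order continuity of `T` gives
`inf T(C) = 0`, and a lower bound of `S(D)` is, by positivity of `S`, a lower bound of
`S(C) = T(C)`.
-/

open Set

section OrderedGroup

variable {G : Type*} [AddCommGroup G] [PartialOrder G] [AddLeftMono G]

theorem nonpos_of_mem_lowerBounds_of_forall_sub_mem
    (arch : ∀ x y : G, (∀ n : ℕ, n • x ≤ y) → x ≤ 0) {U : Set G} {e x z : G}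
    (hU : ∀ y ∈ U, y - e ∈ U) (hz : z ∈ U) (hx : x ∈ lowerBounds U) : e ≤ 0 := by
  refine arch e (z - x) fun n => ?_
  have hmem : z - n • e ∈ U := by
    induction n with
    | zero => simpa using hz
    | succ n ih => simpa [succ_nsmul, sub_sub] using hU _ ih
  exact le_sub_comm.1 (hx hmem)

end OrderedGroup

theorem isGLB_inter_Ici_of_orderDense_of_majorizing
    {G : Type*} [Lattice G] [AddCommGroup G] [AddLeftMono G]
    (arch : ∀ x y : G, (∀ n : ℕ, n • x ≤ y) → x ≤ 0) {E : Set G}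
    (hEsub : ∀ y ∈ E, ∀ e ∈ E, y - e ∈ E)
    (hdense : ∀ x : G, 0 < x → ∃ y ∈ E, 0 < y ∧ y ≤ x)
    (hmaj : ∀ x : G, ∃ y ∈ E, x ≤ y) (x : G) :
    IsGLB (E ∩ Ici x) x := by
  refine ⟨fun y hy => hy.2, fun c hc => ?_⟩
  by_contra hcx
  have hpos : 0 < c ⊔ x - x :=
    sub_pos.2 (lt_of_le_not_ge le_sup_right fun h => hcx (le_sup_left.trans h))
  obtain ⟨e, heE, he, hle⟩ := hdense _ hpos
  obtain ⟨z, hzE, hxz⟩ := hmaj x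
  -- every `y ∈ E` above `x` lies above `c ⊔ x ≥ x + e`, so `E ∩ Ici x` is stable under `· - e`
  have hstable : ∀ y ∈ E ∩ Ici x, y - e ∈ E ∩ Ici x := fun y hy =>
    ⟨hEsub y hy.1 e heE,
      le_sub_comm.2 (hle.trans (sub_le_sub_right (sup_le (hc hy) hy.2) x))⟩
  exact he.not_ge
    (nonpos_of_mem_lowerBounds_of_forall_sub_mem arch hstable ⟨hzE, hxz⟩ fun y hy => hy.2)

section Preorder

variable {α : Type*} {E D : Set α}

theorem isGLB_inter_upperClosure [Preorder α] {a : α}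
    (hE : ∀ x ∈ D, IsGLB (E ∩ Ici x) x) (hD : IsGLB D a) :
    IsGLB (E ∩ (upperClosure D : Set α)) a := by
  refine ⟨fun y hy => ?_, fun c hc => hD.2 fun d hd => (hE d hd).2 fun y hy => ?_⟩
  · obtain ⟨d, hd, hdy⟩ := mem_upperClosure.1 hy.2
    exact (hD.1 hd).trans hdy
  · exact hc ⟨hy.1, mem_upperClosure.2 ⟨d, hd, hy.2⟩⟩

theorem directedOn_ge_inter_upperClosure [SemilatticeInf α]
    (hE : ∀ x ∈ E, ∀ y ∈ E, x ⊓ y ∈ E) (hD : DirectedOn (· ≥ ·) D) :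
    DirectedOn (· ≥ ·) (E ∩ (upperClosure D : Set α)) := by
  rintro y₁ ⟨hy₁E, hy₁⟩ y₂ ⟨hy₂E, hy₂⟩
  obtain ⟨d₁, hd₁, hdy₁⟩ := mem_upperClosure.1 hy₁
  obtain ⟨d₂, hd₂, hdy₂⟩ := mem_upperClosure.1 hy₂
  obtain ⟨d, hd, hdd₁, hdd₂⟩ := hD d₁ hd₁ d₂ hd₂
  exact ⟨y₁ ⊓ y₂, ⟨hE _ hy₁E _ hy₂E,
    mem_upperClosure.2 ⟨d, hd, le_inf (hdd₁.trans hdy₁) (hdd₂.trans hdy₂)⟩⟩,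
    inf_le_left, inf_le_right⟩

end Preorder

theorem stmt16_general
    {G : Type*} [Lattice G] [AddCommGroup G] [Module ℝ G]
    [CovariantClass G G (· + ·) (· ≤ ·)]
    (arch : ∀ x y : G, (∀ n : ℕ, n • x ≤ y) → x ≤ 0)
    (E : Set G)
    (hEadd : ∀ x ∈ E, ∀ y ∈ E, x + y ∈ E)
    (hEsmul : ∀ (c : ℝ), ∀ x ∈ E, c • x ∈ E)
    (hEinf : ∀ x ∈ E, ∀ y ∈ E, x ⊓ y ∈ E)
    (hdense : ∀ x : G, 0 < x → ∃ y ∈ E, 0 < y ∧ y ≤ x)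
    (hmaj : ∀ x : G, ∃ y ∈ E, x ≤ y)
    {F : Type*} [ConditionallyCompleteLattice F] [AddCommGroup F] [Module ℝ F]
    [CovariantClass F F (· + ·) (· ≤ ·)]
    (T : G → F)
    (hT_oc : ∀ D : Set G, D.Nonempty → D ⊆ E → DirectedOn (· ≥ ·) D →
      IsGLB D 0 → IsGLB (T '' D) 0)
    (S : G →ₗ[ℝ] F)
    (hS_pos : ∀ x : G, 0 ≤ x → 0 ≤ S x)
    (hS_ext : ∀ y ∈ E, S y = T y) :
    ∀ D : Set G, D.Nonempty → (∀ d ∈ D, 0 ≤ d) → DirectedOn (· ≥ ·) D →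
      IsGLB D 0 → IsGLB (S '' D) 0 := by
  intro D ⟨d₀, hd₀⟩ hDpos hDdir hDglb
  have hEsub : ∀ y ∈ E, ∀ e ∈ E, y - e ∈ E := fun y hy e he => by
    simpa [sub_eq_add_neg] using hEadd y hy _ (hEsmul (-1) e he)
  have hS_mono : Monotone S := fun x y hxy =>
    sub_nonneg.1 (by simpa [map_sub] using hS_pos (y - x) (sub_nonneg.2 hxy))
  obtain ⟨y₀, hy₀E, hy₀⟩ := hmaj d₀
  have hTC : IsGLB (T '' (E ∩ (upperClosure D : Set G))) 0 :=
    hT_oc _ ⟨y₀, hy₀E, mem_upperClosure.2 ⟨d₀, hd₀, hy₀⟩⟩ inter_subset_left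
      (directedOn_ge_inter_upperClosure hEinf hDdir)
      (isGLB_inter_upperClosure
        (fun x _ => isGLB_inter_Ici_of_orderDense_of_majorizing arch hEsub hdense hmaj x) hDglb)
  refine ⟨?_, fun b hb => hTC.2 ?_⟩
  · rintro _ ⟨d, hd, rfl⟩
    exact hS_pos d (hDpos d hd)
  · rintro _ ⟨y, ⟨hyE, hy⟩, rfl⟩
    obtain ⟨d, hd, hdy⟩ := mem_upperClosure.1 hy
    exact (hb ⟨d, hd, rfl⟩).trans ((hS_mono hdy).trans_eq (hS_ext y hyE))

theorem stmt16
    {G : Type*} [Lattice G] [AddCommGroup G] [Module ℝ G]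
    [CovariantClass G G (· + ·) (· ≤ ·)] [PosSMulMono ℝ G]
    (arch : ∀ x y : G, (∀ n : ℕ, n • x ≤ y) → x ≤ 0)
    (E : Set G)
    (hE0 : (0 : G) ∈ E)
    (hEadd : ∀ x ∈ E, ∀ y ∈ E, x + y ∈ E)
    (hEsmul : ∀ (c : ℝ), ∀ x ∈ E, c • x ∈ E)
    (hEsup : ∀ x ∈ E, ∀ y ∈ E, x ⊔ y ∈ E)
    (hEinf : ∀ x ∈ E, ∀ y ∈ E, x ⊓ y ∈ E)
    (hdense : ∀ x : G, 0 < x → ∃ y ∈ E, 0 < y ∧ y ≤ x)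
    (hmaj : ∀ x : G, ∃ y ∈ E, x ≤ y)
    {F : Type*} [ConditionallyCompleteLattice F] [AddCommGroup F] [Module ℝ F]
    [CovariantClass F F (· + ·) (· ≤ ·)] [PosSMulMono ℝ F]
    (T : G → F)
    (hT_add : ∀ x ∈ E, ∀ y ∈ E, T (x + y) = T x + T y)
    (hT_smul : ∀ (c : ℝ), ∀ x ∈ E, T (c • x) = c • T x)
    (hT_pos : ∀ x ∈ E, 0 ≤ x → 0 ≤ T x)
    (hT_oc : ∀ D : Set G, D.Nonempty → D ⊆ E → DirectedOn (· ≥ ·) D →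
      IsGLB D 0 → IsGLB (T '' D) 0)
    (S : G →ₗ[ℝ] F)
    (hS_pos : ∀ x : G, 0 ≤ x → 0 ≤ S x)
    (hS_ext : ∀ y ∈ E, S y = T y) :
    ∀ D : Set G, D.Nonempty → (∀ d ∈ D, 0 ≤ d) → DirectedOn (· ≥ ·) D →
      IsGLB D 0 → IsGLB (S '' D) 0 :=
  stmt16_general arch E hEadd hEsmul hEinf hdense hmaj T hT_oc S hS_pos hS_ext
end

section
/- Let T : E → G be a positive linear operator with T(E) ⊆ E that is band preserving in the sense that |T(x)| ∧ |y| = 0 whenever x, y ∈ E satisfy |x| ∧ |y| = 0, and let S : G → G be a positive, order continuous linear operator with S(y) = T(y) for all y ∈ E. Then for all x, y ∈ G with |x| ∧ |y| = 0 one has |S(x)| ∧ |y| = 0. -/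
/-!
For `0 ≤ x`, `0 ≤ y` with `x ⊓ y = 0`, order density and the Archimedean property make `x` the
supremum of the upward directed set of `u ∈ E` with `0 ≤ u ≤ x`. Each such `S u = T u` is disjoint
from `y`: a `0 < w ∈ E` below `T u ⊓ y` would be disjoint from `u`, contradicting band preservation.
Since `x - u ↓ 0`, order continuity gives `S (x - u) ↓ 0`, and `S x ⊓ y` lies below every
`S (x - u)` because it is disjoint from `S u`; so `S x ⊓ y = 0`. The general case follows from
`|S x| ≤ S |x|`.
-/

open Set

section Lattice

variable {α : Type*} [Lattice α] [Zero α]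

theorem inf_eq_zero_of_le {u x y : α} (hu : 0 ≤ u) (hy : 0 ≤ y) (hux : u ≤ x)
    (hxy : x ⊓ y = 0) : u ⊓ y = 0 :=
  le_antisymm (hxy ▸ inf_le_inf_right y hux) (le_inf hu hy)

theorem inf_eq_zero_of_forall_mem {E : Set α} (hdense : ∀ x : α, 0 < x → ∃ y ∈ E, 0 < y ∧ y ≤ x)
    {a y : α} (ha : 0 ≤ a) (hy : 0 ≤ y) (h : ∀ w ∈ E, 0 ≤ w → w ≤ y → a ⊓ w = 0) :
    a ⊓ y = 0 := by
  by_contra hne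
  obtain ⟨w, hwE, hw, hwle⟩ := hdense _ ((le_inf ha hy).lt_of_ne' hne)
  have hw_le_zero : w ≤ a ⊓ w := le_inf (hwle.trans inf_le_left) le_rfl
  rw [h w hwE hw.le (hwle.trans inf_le_right)] at hw_le_zero
  exact hw.not_ge hw_le_zero

end Lattice

section LatticeOrderedGroup

variable {G : Type*} [Lattice G] [AddCommGroup G] [AddLeftMono G]

theorem inf_add_le_inf_add_inf {a b c : G} (ha : 0 ≤ a) (hb : 0 ≤ b) (hc : 0 ≤ c) :
    a ⊓ (b + c) ≤ a ⊓ b + a ⊓ c := by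
  have h_le_add : a ⊓ (b + c) ≤ a ⊓ b + c := by
    rw [inf_add]
    exact inf_le_inf_right _ (le_add_of_nonneg_right hc)
  have h_sub : a ⊓ (b + c) - a ⊓ b ≤ a ⊓ c :=
    le_inf (sub_le_iff_le_add.2 (inf_le_left.trans (le_add_of_nonneg_right (le_inf ha hb))))
      (sub_le_iff_le_add'.2 h_le_add)
  simpa using add_le_add_right h_sub (a ⊓ b)

theorem le_of_le_add_of_inf_eq_zero {a b c : G} (ha : 0 ≤ a) (hb : 0 ≤ b) (hc : 0 ≤ c)
    (hcb : c ⊓ b = 0) (h : c ≤ a + b) : c ≤ a :=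
  calc c = c ⊓ (a + b) := (inf_eq_left.2 h).symm
    _ ≤ c ⊓ a + c ⊓ b := inf_add_le_inf_add_inf hc ha hb
    _ = c ⊓ a := by rw [hcb, add_zero]
    _ ≤ a := inf_le_right

theorem isGLB_sub_image_of_isLUB {A : Set G} {x : G} (h : IsLUB A x) :
    IsGLB ((x - ·) '' A) 0 := by
  have := (OrderIso.subLeft x).isLUB_image'.2 h
  rw [OrderIso.subLeft_apply, sub_self] at this
  exact this

theorem directedOn_sub_image {A : Set G} (h : DirectedOn (· ≤ ·) A) (x : G) :
    DirectedOn (· ≥ ·) ((x - ·) '' A) :=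
  directedOn_image.2 fun u hu v hv => by
    obtain ⟨w, hw, huw, hvw⟩ := h u hu v hv
    exact ⟨w, hw, sub_le_sub_left huw x, sub_le_sub_left hvw x⟩

theorem isLUB_inter_Icc (arch : ∀ x y : G, (∀ n : ℕ, n • x ≤ y) → x ≤ 0) {E : Set G}
    (hE0 : (0 : G) ∈ E) (hEadd : ∀ x ∈ E, ∀ y ∈ E, x + y ∈ E)
    (hdense : ∀ x : G, 0 < x → ∃ y ∈ E, 0 < y ∧ y ≤ x) {x : G} (hx : 0 ≤ x) :
    IsLUB (E ∩ Icc 0 x) x := by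
  refine ⟨fun u hu => hu.2.2, fun b hb => ?_⟩
  by_contra hxb
  have hgap : 0 < (x - b) ⊔ 0 :=
    le_sup_right.lt_of_ne fun h => hxb (sub_nonpos.1 (h ▸ le_sup_left))
  obtain ⟨w, hwE, hw, hw_le⟩ := hdense _ hgap
  -- Below `x` one can always go up by `w` more, so all `n • w ≤ x`.
  have hstep : ∀ u ∈ E ∩ Icc 0 x, u + w ∈ E ∩ Icc 0 x := fun u hu =>
    ⟨hEadd u hu.1 w hwE, add_nonneg hu.2.1 hw.le, by
      refine (add_le_add_right hw_le u).trans ?_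
      rw [add_sup, add_zero, add_sub_left_comm]
      exact sup_le (add_le_of_nonpos_right (sub_nonpos.2 (hb hu))) hu.2.2⟩
  have hmul : ∀ n : ℕ, n • w ∈ E ∩ Icc 0 x := by
    intro n
    induction n with
    | zero => simpa using ⟨hE0, hx⟩
    | succ k ih => simpa [succ_nsmul] using hstep _ ih
  exact hw.not_ge (arch w x fun n => (hmul n).2.2)

end LatticeOrderedGroup

section PositiveMaps

variable {G H F : Type*} [Lattice G] [AddCommGroup G] [AddLeftMono G]
  [Lattice H] [AddCommGroup H] [AddLeftMono H] [FunLike F G H] [AddMonoidHomClass F G H]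

theorem abs_map_le_map_abs (S : F) (hS_pos : ∀ x, 0 ≤ x → 0 ≤ S x) (x : G) : |S x| ≤ S |x| := by
  have h_le : S x ≤ S |x| := by
    simpa [map_sub] using hS_pos _ (sub_nonneg.2 (le_abs_self x))
  have h_neg_le : -S x ≤ S |x| := by
    simpa [map_sub, neg_le_iff_add_nonneg] using hS_pos _ (sub_nonneg.2 (neg_le_abs x))
  exact abs_le'.2 ⟨h_le, h_neg_le⟩

theorem map_inf_eq_zero_of_isLUB (S : F) (hS_pos : ∀ x, 0 ≤ x → 0 ≤ S x)
    (hS_oc : ∀ D : Set G, D.Nonempty → DirectedOn (· ≥ ·) D → IsGLB D 0 → IsGLB (S '' D) 0)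
    {A : Set G} {x : G} {y : H} (hA : A.Nonempty) (hA_dir : DirectedOn (· ≤ ·) A)
    (hA_nonneg : ∀ u ∈ A, 0 ≤ u) (hx : IsLUB A x) (hy : 0 ≤ y) (h : ∀ u ∈ A, S u ⊓ y = 0) :
    S x ⊓ y = 0 := by
  obtain ⟨u₀, hu₀⟩ := hA
  have hc : 0 ≤ S x ⊓ y := le_inf (hS_pos x ((hA_nonneg u₀ hu₀).trans (hx.1 hu₀))) hy
  have hglb := hS_oc _ ⟨_, mem_image_of_mem _ hu₀⟩ (directedOn_sub_image hA_dir x)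
    (isGLB_sub_image_of_isLUB hx)
  refine le_antisymm (hglb.2 ?_) hc
  rintro _ ⟨_, ⟨u, hu, rfl⟩, rfl⟩
  have hSu : 0 ≤ S u := hS_pos u (hA_nonneg u hu)
  refine le_of_le_add_of_inf_eq_zero (hS_pos _ (sub_nonneg.2 (hx.1 hu))) hSu hc
    (inf_eq_zero_of_le hc hSu inf_le_right (inf_comm y (S u) ▸ h u hu)) ?_
  rw [← map_add, sub_add_cancel]
  exact inf_le_left

end PositiveMaps

theorem map_inf_eq_zero_of_bandPreserving {G : Type*} [Lattice G] [AddCommGroup G] [AddLeftMono G]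
    {E : Set G}
    (hdense : ∀ x : G, 0 < x → ∃ y ∈ E, 0 < y ∧ y ≤ x) {T : G → G}
    (hT_pos : ∀ x ∈ E, 0 ≤ x → 0 ≤ T x)
    (hT_band : ∀ x ∈ E, ∀ y ∈ E, |x| ⊓ |y| = 0 → |T x| ⊓ |y| = 0)
    {u y : G} (hu : u ∈ E) (hu0 : 0 ≤ u) (hy : 0 ≤ y) (huy : u ⊓ y = 0) : T u ⊓ y = 0 := by
  have hTu := hT_pos u hu hu0
  refine inf_eq_zero_of_forall_mem hdense hTu hy fun w hwE hw hwy => ?_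
  have huw : |u| ⊓ |w| = 0 := by
    rw [abs_of_nonneg hu0, abs_of_nonneg hw, inf_comm]
    exact inf_eq_zero_of_le hw hu0 hwy (inf_comm u y ▸ huy)
  simpa only [abs_of_nonneg hTu, abs_of_nonneg hw] using hT_band u hu w hwE huw

theorem stmt17_general
    {G : Type*} [Lattice G] [AddCommGroup G] [Module ℝ G]
    [CovariantClass G G (· + ·) (· ≤ ·)]
    (arch : ∀ x y : G, (∀ n : ℕ, n • x ≤ y) → x ≤ 0)
    (E : Set G)
    (hE0 : (0 : G) ∈ E)
    (hEadd : ∀ x ∈ E, ∀ y ∈ E, x + y ∈ E)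
    (hEsup : ∀ x ∈ E, ∀ y ∈ E, x ⊔ y ∈ E)
    (hdense : ∀ x : G, 0 < x → ∃ y ∈ E, 0 < y ∧ y ≤ x)
    (T : G → G)
    (hT_pos : ∀ x ∈ E, 0 ≤ x → 0 ≤ T x)
    (hT_band : ∀ x ∈ E, ∀ y ∈ E, |x| ⊓ |y| = 0 → |T x| ⊓ |y| = 0)
    (S : G →ₗ[ℝ] G)
    (hS_pos : ∀ x : G, 0 ≤ x → 0 ≤ S x)
    (hS_oc : ∀ D : Set G, D.Nonempty → DirectedOn (· ≥ ·) D → IsGLB D 0 →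
      IsGLB (S '' D) 0)
    (hS_ext : ∀ y ∈ E, S y = T y) :
    ∀ x y : G, |x| ⊓ |y| = 0 → |S x| ⊓ |y| = 0 := by
  intro x y hxy
  have hA : (E ∩ Icc 0 |x|).Nonempty := ⟨0, hE0, le_rfl, abs_nonneg x⟩
  have hA_dir : DirectedOn (· ≤ ·) (E ∩ Icc 0 |x|) := fun u hu v hv =>
    ⟨u ⊔ v, ⟨hEsup u hu.1 v hv.1, hu.2.1.trans le_sup_left, sup_le hu.2.2 hv.2.2⟩,
      le_sup_left, le_sup_right⟩
  have hS_abs : S |x| ⊓ |y| = 0 :=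
    map_inf_eq_zero_of_isLUB S hS_pos hS_oc hA hA_dir
      (fun u hu => hu.2.1) (isLUB_inter_Icc arch hE0 hEadd hdense (abs_nonneg x))
      (abs_nonneg y) fun u hu => by
        rw [hS_ext u hu.1]
        exact map_inf_eq_zero_of_bandPreserving hdense hT_pos hT_band hu.1 hu.2.1 (abs_nonneg y)
          (inf_eq_zero_of_le hu.2.1 (abs_nonneg y) hu.2.2 hxy)
  exact le_antisymm ((inf_le_inf_right _ (abs_map_le_map_abs S hS_pos x)).trans hS_abs.le)
    (le_inf (abs_nonneg _) (abs_nonneg _))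

theorem stmt17
    {G : Type*} [Lattice G] [AddCommGroup G] [Module ℝ G]
    [CovariantClass G G (· + ·) (· ≤ ·)] [PosSMulMono ℝ G]
    (arch : ∀ x y : G, (∀ n : ℕ, n • x ≤ y) → x ≤ 0)
    (E : Set G)
    (hE0 : (0 : G) ∈ E)
    (hEadd : ∀ x ∈ E, ∀ y ∈ E, x + y ∈ E)
    (hEsmul : ∀ (c : ℝ), ∀ x ∈ E, c • x ∈ E)
    (hEsup : ∀ x ∈ E, ∀ y ∈ E, x ⊔ y ∈ E)
    (hEinf : ∀ x ∈ E, ∀ y ∈ E, x ⊓ y ∈ E)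
    (hdense : ∀ x : G, 0 < x → ∃ y ∈ E, 0 < y ∧ y ≤ x)
    (hmaj : ∀ x : G, ∃ y ∈ E, x ≤ y)
    (T : G → G)
    (hTE : ∀ x ∈ E, T x ∈ E)
    (hT_add : ∀ x ∈ E, ∀ y ∈ E, T (x + y) = T x + T y)
    (hT_smul : ∀ (c : ℝ), ∀ x ∈ E, T (c • x) = c • T x)
    (hT_pos : ∀ x ∈ E, 0 ≤ x → 0 ≤ T x)
    (hT_band : ∀ x ∈ E, ∀ y ∈ E, |x| ⊓ |y| = 0 → |T x| ⊓ |y| = 0)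
    (S : G →ₗ[ℝ] G)
    (hS_pos : ∀ x : G, 0 ≤ x → 0 ≤ S x)
    (hS_oc : ∀ D : Set G, D.Nonempty → DirectedOn (· ≥ ·) D → IsGLB D 0 →
      IsGLB (S '' D) 0)
    (hS_ext : ∀ y ∈ E, S y = T y) :
    ∀ x y : G, |x| ⊓ |y| = 0 → |S x| ⊓ |y| = 0 :=
  stmt17_general arch E hE0 hEadd hEsup hdense T hT_pos hT_band S hS_pos hS_oc hS_ext
end
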